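/- arXiv:2601.15501 — 12 statements merged into one kernel-verified Lean document; each statement's English description precedes it below -/
import Mathlib

section
/- Let (S, *, n) be a composition algebra over a field F, i.e., an F-algebra with a strictly nondegenerate quadratic form n satisfying n(x*y) = n(x)n(y) for all x, y. Then S is symmetric (i.e., n(x*y, z) = n(x, y*z) for all x, y, z, where n(·,·) is the polar bilinear form of n) if and only if (x*y)*x = x*(y*x) = n(x)·y for all x, y in S. -/
open QuadraticMap

section aux
variable {F S : Type*} [Field F] [AddCommGroup S] [Module F S]
  (mul : S →ₗ[F] S →ₗ[F] S) (n : QuadraticForm F S)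

/-- Right multiplication is a similitude. -/
lemma stmt0_rsim (hcomp : ∀ x y : S, n (mul x y) = n x * n y) (a b x : S) :
    polar (⇑n) (mul a x) (mul b x) = polar (⇑n) a b * n x := by
  have h : mul a x + mul b x = mul (a + b) x := by simp [map_add]
  simp only [QuadraticMap.polar, h, hcomp]
  ring

/-- Polarized right similitude. -/
lemma stmt0_p2 (hcomp : ∀ x y : S, n (mul x y) = n x * n y) (a b x w : S) :
    polar (⇑n) (mul a x) (mul b w) + polar (⇑n) (mul a w) (mul b x)
      = polar (⇑n) x w * polar (⇑n) a b := by
  have h := stmt0_rsim mul n hcomp a b (x + w)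
  simp only [map_add] at h
  rw [polar_add_left, polar_add_right, polar_add_right] at h
  have hn : n (x + w) = n x + n w + polar (⇑n) x w := by
    simp only [QuadraticMap.polar]; ring
  rw [hn, stmt0_rsim mul n hcomp a b x, stmt0_rsim mul n hcomp a b w] at h
  linear_combination h

/-- Linearization of `(x*y)*x = n(x) • y` in `x`. -/
lemma stmt0_lemA
    (H : ∀ x y : S, mul (mul x y) x = n x • y ∧ mul x (mul y x) = n x • y) (x y w : S) :
    mul (mul x y) w + mul (mul w y) x = polar (⇑n) x w • y := by
  have h := (H (x + w) y).1
  simp only [map_add, LinearMap.add_apply] at h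
  rw [(H x y).1, (H w y).1] at h
  have hn : n (x + w) = n x + n w + polar (⇑n) x w := by
    simp only [QuadraticMap.polar]; ring
  rw [hn, add_smul, add_smul] at h
  calc mul (mul x y) w + mul (mul w y) x
      = (n x • y + mul (mul w y) x + (mul (mul x y) w + n w • y))
        - (n x • y + n w • y) := by abel
    _ = (n x • y + n w • y + polar (⇑n) x w • y) - (n x • y + n w • y) := by rw [h]
    _ = polar (⇑n) x w • y := by abel

/-- The key identity (K). -/
lemma stmt0_K (hcomp : ∀ x y : S, n (mul x y) = n x * n y)
    (H : ∀ x y : S, mul (mul x y) x = n x • y ∧ mul x (mul y x) = n x • y) (x y z w : S) :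
    polar (⇑n) x w * (polar (⇑n) (mul x y) z - polar (⇑n) y (mul z x))
      = n x * (polar (⇑n) y (mul z w) - polar (⇑n) (mul w y) z) := by
  have h := stmt0_p2 mul n hcomp (mul x y) z x w
  rw [(H x y).1, polar_smul_left] at h
  have hA : mul (mul x y) w = polar (⇑n) x w • y - mul (mul w y) x := by
    rw [← stmt0_lemA mul n H x y w]; abel
  rw [hA, polar_sub_left, polar_smul_left,
    stmt0_rsim mul n hcomp (mul w y) z x] at h
  simp only [smul_eq_mul] at h
  linear_combination -h

/-- The identity `U ≡ 0` : `B(xy, z) = B(y, zx)`. -/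
lemma stmt0_U (hnd : ∀ x : S, (∀ y : S, QuadraticMap.polar (⇑n) x y = 0) → x = 0)
    (hcomp : ∀ x y : S, n (mul x y) = n x * n y)
    (H : ∀ x y : S, mul (mul x y) x = n x • y ∧ mul x (mul y x) = n x • y) (x y z : S) :
    polar (⇑n) (mul x y) z = polar (⇑n) y (mul z x) := by
  have hkill : n x * (polar (⇑n) (mul x y) z - polar (⇑n) y (mul z x)) = 0 := by
    have h := stmt0_rsim mul n hcomp (mul x y) z x
    rw [(H x y).1, polar_smul_left] at h
    simp only [smul_eq_mul] at h
    linear_combination -h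
  rcases eq_or_ne (n x) 0 with hx | hx
  · by_cases hU : polar (⇑n) (mul x y) z - polar (⇑n) y (mul z x) = 0
    · exact sub_eq_zero.mp hU
    · exfalso
      have hx0 : x = 0 := by
        apply hnd
        intro w
        have hk := stmt0_K mul n hcomp H x y z w
        rw [hx, zero_mul] at hk
        exact (mul_eq_zero.mp hk).resolve_right hU
      apply hU
      simp [hx0]
  · exact sub_eq_zero.mp (mul_left_cancel₀ hx (hkill.trans (mul_zero _).symm))
end aux



/-- A composition algebra `(S, *, n)` is symmetric, i.e.
`n(x*y, z) = n(x, y*z)` for the polar bilinear form, if and only if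
`(x*y)*x = x*(y*x) = n(x) • y` for all `x, y`. -/
theorem stmt0 {F S : Type*} [Field F] [AddCommGroup S] [Module F S]
    (mul : S →ₗ[F] S →ₗ[F] S) (n : QuadraticForm F S)
    (hnd : ∀ x : S, (∀ y : S, QuadraticMap.polar (⇑n) x y = 0) → x = 0)
    (hcomp : ∀ x y : S, n (mul x y) = n x * n y) :
    (∀ x y z : S, QuadraticMap.polar (⇑n) (mul x y) z = QuadraticMap.polar (⇑n) x (mul y z)) ↔
      (∀ x y : S, mul (mul x y) x = n x • y ∧ mul x (mul y x) = n x • y) := by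
  constructor
  · intro hs x y
    constructor
    · apply sub_eq_zero.mp
      apply hnd
      intro z
      rw [polar_sub_left, polar_smul_left]
      have h1 : polar (⇑n) (mul (mul x y) x) z = polar (⇑n) (mul x y) (mul x z) :=
        hs (mul x y) x z
      -- left similitude
      have h2 : polar (⇑n) (mul x y) (mul x z) = n x * polar (⇑n) y z := by
        have h : mul x y + mul x z = mul x (y + z) := by simp [map_add]
        simp only [QuadraticMap.polar, h, hcomp]
        ring
      simp only [smul_eq_mul]
      rw [h1, h2]; ring
    · apply sub_eq_zero.mp
      apply hnd
      intro z
      rw [polar_sub_left, polar_smul_left]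
      have h1 : polar (⇑n) (mul x (mul y x)) z = polar (⇑n) (mul z x) (mul y x) := by
        rw [polar_comm]
        exact (hs z x (mul y x)).symm
      have h2 : polar (⇑n) (mul z x) (mul y x) = polar (⇑n) z y * n x :=
        stmt0_rsim mul n hcomp z y x
      simp only [smul_eq_mul]
      rw [h1, h2, polar_comm (⇑n) z y]; ring
  · intro H x y z
    rw [polar_comm (⇑n) x (mul y z), stmt0_U mul n hnd hcomp H y z x,
      polar_comm]
end

section
/- Let (S, *, n) be a symmetric composition algebra over a field F. Then for every x in S: (x*x)*(x*x) = n(x, x*x)·x − n(x)·(x*x), where n(·,·) is the bilinear form associated to n. -/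
/-- In a symmetric composition algebra,
`(x*x)*(x*x) = n(x, x*x) • x − n(x) • (x*x)` for every `x`. -/
theorem stmt2 {F S : Type*} [Field F] [AddCommGroup S] [Module F S]
    (mul : S →ₗ[F] S →ₗ[F] S) (n : QuadraticForm F S)
    (hnd : ∀ x : S, (∀ y : S, QuadraticMap.polar (⇑n) x y = 0) → x = 0)
    (hcomp : ∀ x y : S, n (mul x y) = n x * n y)
    (hsym : ∀ x y : S, mul (mul x y) x = n x • y ∧ mul x (mul y x) = n x • y) :
    ∀ x : S,
      mul (mul x x) (mul x x) =
        QuadraticMap.polar (⇑n) x (mul x x) • x - n x • mul x x := by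
  intro x
  set u := mul x x with hu
  have hx : mul x u = n x • x := (hsym x x).2
  have hus : mul u (mul x u) = n u • x := (hsym u x).2
  have h2 : mul (x + u) (mul x (x + u)) = n (x + u) • x := (hsym (x + u) x).2
  have hxxu : mul x (mul x u) = n x • u := by
    rw [hx, map_smul, ← hu]
  have hexp : mul x u + n x • u + (mul u u + n u • x) = n (x + u) • x := by
    have := h2
    simp only [map_add, LinearMap.add_apply] at this
    rw [hxxu, hus] at this
    rw [← this, hu]
    abel
  have hpolar : QuadraticMap.polar (⇑n) x u = n (x + u) - n x - n u := rfl
  rw [hx] at hexp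
  rw [hpolar, sub_smul, sub_smul, ← hexp]
  abel
end

section
/- Let F be a field with char F ≠ 3 containing a primitive cube root of unity, and let P₈(F) be the pseudo-octonion algebra on sl₃(F) with product x * y = μxy + (1−μ)yx − (tr(xy)/3)·I. For nilpotent 3×3 traceless matrices a and b, the conditions a*b = b*a = 0 (orthogonality in P₈(F)) and ab = ba = 0 (orthogonality as matrices) are equivalent. -/
open Matrix

/-- The pseudo-octonion product `x * y = μ x y + (1−μ) y x − (tr(xy)/3) I` on `3×3` matrices. -/
noncomputable def pOct {F : Type*} [Field F] (μ : F) (x y : Matrix (Fin 3) (Fin 3) F) :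
    Matrix (Fin 3) (Fin 3) F :=
  μ • (x * y) + (1 - μ) • (y * x) - ((x * y).trace / 3) • (1 : Matrix (Fin 3) (Fin 3) F)

/-- For nilpotent `3×3` matrices `a, b`, orthogonality in `P₈(F)`
(`a*b = b*a = 0`) is equivalent to orthogonality as matrices (`ab = ba = 0`). -/
theorem stmt9 {F : Type*} [Field F] (h3 : ringChar F ≠ 3) (ω : F)
    (hω : IsPrimitiveRoot ω 3)
    (a b : Matrix (Fin 3) (Fin 3) F) (ha : IsNilpotent a) (hb : IsNilpotent b) :
    (pOct ((1 - ω ^ 2) / 3) a b = 0 ∧ pOct ((1 - ω ^ 2) / 3) b a = 0) ↔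
      (a * b = 0 ∧ b * a = 0) := by
  have h3F : (3 : F) ≠ 0 := by
    intro h
    have hd : ringChar F ∣ 3 := (ringChar.spec F 3).mp (by exact_mod_cast h)
    rcases (Nat.prime_three.eq_one_or_self_of_dvd _ hd) with h1 | h1
    · haveI := ringChar.charP F
      exact CharP.char_ne_one F (ringChar F) h1
    · exact h3 h1
  set μ : F := (1 - ω ^ 2) / 3 with hμdef
  have hμne : 2 * μ - 1 ≠ 0 := by
    intro h
    have hω3 : ω ^ 3 = 1 := hω.pow_eq_one
    have key : 2 * ω ^ 2 + 1 = 0 := by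
      rw [hμdef] at h
      field_simp at h
      linear_combination -h
    have hωv : ω = -2 := by linear_combination ω * key - 2 * hω3
    rw [hωv] at key
    have h33 : (3 : F) * 3 = 0 := by linear_combination key
    rcases mul_eq_zero.mp h33 with h' | h' <;> exact h3F h'
  constructor
  · rintro ⟨h1, h2⟩
    unfold pOct at h1 h2
    rw [Matrix.trace_mul_comm b a] at h2
    have hcomm : a * b = b * a := by
      have hsub : (2 * μ - 1) • (a * b - b * a) = 0 := by
        linear_combination (norm := module) h1 - h2
      rcases smul_eq_zero.mp hsub with h' | h'
      · exact absurd h' hμne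
      · exact sub_eq_zero.mp h'
    have habI : a * b = ((a * b).trace / 3) • (1 : Matrix (Fin 3) (Fin 3) F) := by
      rw [← hcomm] at h1
      linear_combination (norm := module) h1
    have hdeta : a.det = 0 := by
      obtain ⟨n, hn⟩ := ha
      rcases Nat.eq_zero_or_pos n with rfl | hn0
      · simp only [pow_zero] at hn
        exact absurd (congrArg Matrix.det hn) (by simp)
      · have : a.det ^ n = 0 := by rw [← Matrix.det_pow, hn, Matrix.det_zero]
        exact pow_eq_zero_iff hn0.ne' |>.mp this
    have hc : (a * b).trace / 3 = 0 := by
      have hdet : (a * b).det = ((a * b).trace / 3) ^ 3 := by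
        conv_lhs => rw [habI]
        rw [Matrix.det_smul, Matrix.det_one]
        simp [Fintype.card_fin]
      rw [Matrix.det_mul, hdeta, zero_mul] at hdet
      exact pow_eq_zero_iff (by norm_num) |>.mp hdet.symm
    constructor
    · rw [habI, hc, zero_smul]
    · rw [← hcomm, habI, hc, zero_smul]
  · rintro ⟨h1, h2⟩
    unfold pOct
    rw [h1, h2]
    simp
end

section
/- Let F be a field with char F ≠ 3 containing a primitive cube root of unity, and let y be a zero divisor in the pseudo-octonion algebra P₈(F) (i.e., a nonzero traceless 3×3 matrix with n(y) = 0). Then y * y = y·y (the *-square equals the matrix square), and n(y, y*y) = tr(y³)/3. Consequently, n(y, y*y) = 0 if y is nilpotent, and n(y, y*y) ≠ 0 if y is a nonzero scalar multiple of a matrix conjugate to diag(1, ω, ω²). -/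
open Matrix

/-- The norm `n(x) = −s(x)/3`, `s(x)` being the degree-1 coefficient of `det(λI − x)`. -/
noncomputable def pNorm {F : Type*} [Field F] (x : Matrix (Fin 3) (Fin 3) F) : F :=
  -((Matrix.charpoly x).coeff 1) / 3

open Polynomial in
lemma coeff1 {F : Type*} [Field F] (A : Matrix (Fin 3) (Fin 3) F) :
    (Matrix.charpoly A).coeff 1 =
      A 0 0 * A 1 1 + A 0 0 * A 2 2 + A 1 1 * A 2 2
        - A 0 1 * A 1 0 - A 0 2 * A 2 0 - A 1 2 * A 2 1 := by
  rw [Matrix.charpoly, Matrix.det_fin_three]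
  simp [charmatrix_apply_eq, charmatrix_apply_ne, Fin.ext_iff]
  ring_nf
  simp [coeff_one, coeff_X, coeff_C]
  ring

lemma tr_sq {F : Type*} [Field F] (A : Matrix (Fin 3) (Fin 3) F) :
    (A * A).trace = A.trace ^ 2 - 2 * (Matrix.charpoly A).coeff 1 := by
  rw [coeff1, trace_fin_three, trace_fin_three]
  simp [Matrix.mul_apply, Fin.sum_univ_three]
  ring

lemma polar {F : Type*} [Field F] (A B : Matrix (Fin 3) (Fin 3) F) :
    (Matrix.charpoly (A + B)).coeff 1 - (Matrix.charpoly A).coeff 1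
      - (Matrix.charpoly B).coeff 1 = A.trace * B.trace - (A * B).trace := by
  rw [coeff1, coeff1, coeff1, trace_fin_three, trace_fin_three, trace_fin_three]
  simp [Matrix.mul_apply, Fin.sum_univ_three]
  ring

/-- For a zero divisor `y` of `P₈(F)` (a nonzero traceless matrix
with `n(y) = 0`): `y * y` in `P₈(F)` is the matrix square, the bilinear form
satisfies `n(y, y*y) = tr(y³)/3`; it vanishes when `y` is nilpotent and is
nonzero when `y` is a nonzero multiple of a conjugate of `diag(1, ω, ω²)`. -/
theorem stmt10 {F : Type*} [Field F] (h3 : ringChar F ≠ 3) (ω : F)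
    (hω : IsPrimitiveRoot ω 3)
    (y : Matrix (Fin 3) (Fin 3) F) (hy : y.trace = 0) (hy0 : y ≠ 0)
    (hyn : pNorm y = 0) :
    pOct ((1 - ω ^ 2) / 3) y y = y * y ∧
    pNorm (y + y * y) - pNorm y - pNorm (y * y) = (y ^ 3).trace / 3 ∧
    (IsNilpotent y → pNorm (y + y * y) - pNorm y - pNorm (y * y) = 0) ∧
    ((∃ (c : F) (g : GL (Fin 3) F), c ≠ 0 ∧
        y = c • ((g : Matrix (Fin 3) (Fin 3) F) * Matrix.diagonal ![1, ω, ω ^ 2] *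
          ((g⁻¹ : GL (Fin 3) F) : Matrix (Fin 3) (Fin 3) F))) →
      pNorm (y + y * y) - pNorm y - pNorm (y * y) ≠ 0) := by
  have h30 : (3 : F) ≠ 0 := by
    intro h
    exact h3 (CharP.ringChar_of_prime_eq_zero Nat.prime_three (by exact_mod_cast h))
  have hc1 : (Matrix.charpoly y).coeff 1 = 0 := by
    unfold pNorm at hyn
    rcases div_eq_zero_iff.mp hyn with h | h
    · exact neg_eq_zero.mp h
    · exact absurd h h30
  have htr2 : (y * y).trace = 0 := by rw [tr_sq, hy, hc1]; ring
  have e3 : y * (y * y) = y ^ 3 := by rw [pow_succ, sq, mul_assoc]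
  have key : pNorm (y + y * y) - pNorm y - pNorm (y * y) = (y ^ 3).trace / 3 := by
    have hp := polar y (y * y)
    rw [hy, zero_mul, e3] at hp
    unfold pNorm
    linear_combination (-(1 : F) / 3) * hp
  refine ⟨?_, key, ?_, ?_⟩
  · unfold pOct
    rw [htr2, zero_div, zero_smul, sub_zero, ← add_smul]
    ring_nf
    exact one_smul _ _
  · intro hn
    obtain ⟨k, hk⟩ := hn
    have hn3 : IsNilpotent (y ^ 3) := ⟨k, by rw [← pow_mul, mul_comm, pow_mul, hk]; simp⟩
    have := (Matrix.isNilpotent_trace_of_isNilpotent hn3).eq_zero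
    rw [key, this, zero_div]
  · rintro ⟨c, g, hc, hrep⟩
    rw [key]
    have hD3 : (Matrix.diagonal ![1, ω, ω ^ 2] : Matrix (Fin 3) (Fin 3) F) ^ 3 = 1 := by
      rw [Matrix.diagonal_pow]
      have hω3 : ω ^ 3 = 1 := hω.pow_eq_one
      have : (![1, ω, ω ^ 2] ^ 3 : Fin 3 → F) = 1 := by
        funext i
        fin_cases i <;> simp [Pi.pow_apply, hω3] <;>
          linear_combination (ω ^ 3 + 1) * hω3
      rw [this]
      exact Matrix.diagonal_one
    have hy3 : y ^ 3 = (c ^ 3) • (1 : Matrix (Fin 3) (Fin 3) F) := by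
      rw [hrep, _root_.smul_pow, Units.conj_pow, hD3, mul_one, g.mul_inv]
    rw [hy3]
    simp only [Matrix.trace_smul, Matrix.trace_one]
    simp only [Fintype.card_fin, smul_eq_mul]
    rw [Nat.cast_ofNat, mul_div_assoc, div_self h30, mul_one]
    exact pow_ne_zero 3 hc
end

section
/- Let O be an Okubo algebra (symmetric composition algebra of dimension 8 satisfying the Okubo identities) with isotropic norm over a field F, and let x be a zero divisor in O with n(x, x*x) ≠ 0. Then: (1) x*x ≠ 0 and x*x is not a scalar multiple of x; (2) the orthogonalizer O(x) = {b : x*b = b*x = 0} equals F·(x*x); (3) (x*x)*(x*x) = n(x,x*x)·x ≠ 0 and O(x*x) = F·x. Hence in the orthogonality graph on projective classes of two-sided zero divisors, {[x], [x*x]} is a connected component of diameter 1. -/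
/-- In an Okubo algebra (8-dimensional symmetric composition algebra)
with isotropic norm, a zero divisor `x` with `n(x, x*x) ≠ 0` satisfies:
(1) `x*x ≠ 0` and `x*x ∉ F·x`; (2) the orthogonalizer of `x` is `F·(x*x)`;
(3) `(x*x)*(x*x) = n(x,x*x) • x ≠ 0` and the orthogonalizer of `x*x` is `F·x`.
Hence `{[x], [x*x]}` is a connected component of diameter 1 of the orthogonality
graph on projective classes of two-sided zero divisors. -/
theorem stmt11 {F S : Type*} [Field F] [AddCommGroup S] [Module F S]
    (hdim : Module.finrank F S = 8)
    (mul : S →ₗ[F] S →ₗ[F] S) (n : QuadraticForm F S)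
    (hnd : ∀ a : S, (∀ b : S, QuadraticMap.polar (⇑n) a b = 0) → a = 0)
    (hcomp : ∀ a b : S, n (mul a b) = n a * n b)
    (hsym : ∀ a b : S, mul (mul a b) a = n a • b ∧ mul a (mul b a) = n a • b)
    (hiso : ∃ a : S, a ≠ 0 ∧ n a = 0)
    (x : S)
    (hx : x ≠ 0 ∧ (∃ b, b ≠ 0 ∧ mul x b = 0) ∧ (∃ b, b ≠ 0 ∧ mul b x = 0))
    (hnxxx : QuadraticMap.polar (⇑n) x (mul x x) ≠ 0) :
    (mul x x ≠ 0 ∧ ¬∃ c : F, mul x x = c • x) ∧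
    (∀ b : S, (mul x b = 0 ∧ mul b x = 0) ↔ ∃ c : F, b = c • mul x x) ∧
    (mul (mul x x) (mul x x) = QuadraticMap.polar (⇑n) x (mul x x) • x ∧
      mul (mul x x) (mul x x) ≠ 0) ∧
    (∀ b : S, (mul (mul x x) b = 0 ∧ mul b (mul x x) = 0) ↔ ∃ c : F, b = c • x) ∧
    (mul x (mul x x) = 0 ∧ mul (mul x x) x = 0) ∧
    (∀ b : S,
      (b ≠ 0 ∧ (∃ c, c ≠ 0 ∧ mul b c = 0) ∧ (∃ c, c ≠ 0 ∧ mul c b = 0)) →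
      Relation.ReflTransGen
        (fun u v => mul u v = 0 ∧ mul v u = 0 ∧ ¬∃ c : F, v = c • u) x b →
      ∃ c : F, c ≠ 0 ∧ (b = c • x ∨ b = c • mul x x)) := by
  classical
  obtain ⟨hx0, ⟨b0, hb00, hb0⟩, ⟨b1, hb10, hb1⟩⟩ := hx
  -- polar expansion of n on a sum
  have hpol : ∀ u w : S, n (u + w) = n u + n w + QuadraticMap.polar (⇑n) u w := by
    intro u w
    simp only [QuadraticMap.polar]
    ring
  -- linearization of (a*b)*a = n(a) • b
  have lin1 : ∀ u v w : S, mul (mul u v) w + mul (mul w v) u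
      = QuadraticMap.polar (⇑n) u w • v := by
    intro u v w
    have E := (hsym (u + w) v).1
    simp only [map_add, LinearMap.add_apply] at E
    rw [(hsym u v).1, (hsym w v).1, hpol] at E
    have h : mul (mul u v) w + mul (mul w v) u
        = (n u + n w + QuadraticMap.polar (⇑n) u w) • v - n u • v - n w • v := by
      rw [← E]; abel
    rw [h, add_smul, add_smul]; abel
  -- linearization of a*(b*a) = n(a) • b
  have lin2 : ∀ u v w : S, mul u (mul v w) + mul w (mul v u)
      = QuadraticMap.polar (⇑n) u w • v := by
    intro u v w
    have E := (hsym (u + w) v).2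
    simp only [map_add, LinearMap.add_apply] at E
    rw [(hsym u v).2, (hsym w v).2, hpol] at E
    have h : mul u (mul v w) + mul w (mul v u)
        = (n u + n w + QuadraticMap.polar (⇑n) u w) • v - n u • v - n w • v := by
      rw [← E]; abel
    rw [h, add_smul, add_smul]; abel
  -- linearization of the composition law in the first argument
  have linA : ∀ u v w : S, QuadraticMap.polar (⇑n) (mul u v) (mul w v)
      = QuadraticMap.polar (⇑n) u w * n v := by
    intro u v w
    have h := hcomp (u + w) v
    simp only [map_add, LinearMap.add_apply] at h
    rw [hpol, hpol, hcomp, hcomp] at h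
    linear_combination h
  -- full linearization of the composition law
  have linC : ∀ u v w t : S,
      QuadraticMap.polar (⇑n) (mul u v) (mul w t)
        + QuadraticMap.polar (⇑n) (mul u t) (mul w v)
      = QuadraticMap.polar (⇑n) u w * QuadraticMap.polar (⇑n) v t := by
    intro u v w t
    have h := linA u (v + t) w
    simp only [map_add, hpol, QuadraticMap.polar_add_left, QuadraticMap.polar_add_right]
      at h
    rw [linA u v w, linA u t w] at h
    linear_combination h
  -- key lemma: orthogonal + polar-orthogonal to z forces 0
  have key : ∀ z b : S, mul z b = 0 → mul b z = 0 →
      QuadraticMap.polar (⇑n) z b = 0 →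
      QuadraticMap.polar (⇑n) z (mul z z) ≠ 0 → b = 0 := by
    intro z b h1 h2 h3 h4
    apply hnd b
    intro w
    have e1 : mul b (mul z w) = QuadraticMap.polar (⇑n) b w • z := by
      have := lin2 b z w
      rw [h1] at this
      simpa using this
    have e2 := linC b (mul z w) z z
    rw [h2, e1] at e2
    rw [QuadraticMap.polar_smul_left, QuadraticMap.polar_zero_left,
      QuadraticMap.polar_comm (⇑n) b z, h3] at e2
    simp only [smul_eq_mul, add_zero, zero_mul] at e2
    exact (mul_eq_zero.mp e2).resolve_right h4
  -- the orthogonalizer of z is F • (z*z)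
  have horth : ∀ z : S, n z = 0 →
      QuadraticMap.polar (⇑n) z (mul z z) ≠ 0 →
      ∀ b : S, (mul z b = 0 ∧ mul b z = 0) ↔ ∃ c : F, b = c • mul z z := by
    intro z hz hs b
    have hzy : mul z (mul z z) = 0 := by
      have := (hsym z z).2; rw [hz, zero_smul] at this; exact this
    have hyz : mul (mul z z) z = 0 := by
      have := (hsym z z).1; rw [hz, zero_smul] at this; exact this
    constructor
    · rintro ⟨h1, h2⟩
      set c : F := QuadraticMap.polar (⇑n) z b / QuadraticMap.polar (⇑n) z (mul z z)
        with hc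
      refine ⟨c, ?_⟩
      have hb' : b - c • mul z z = 0 := by
        apply key z _ ?_ ?_ ?_ hs
        · rw [map_sub, map_smul, h1, hzy, smul_zero, sub_zero]
        · rw [map_sub, LinearMap.sub_apply, h2, map_smul, LinearMap.smul_apply,
            hyz, smul_zero, sub_zero]
        · rw [QuadraticMap.polar_sub_right, QuadraticMap.polar_smul_right,
            smul_eq_mul, hc, div_mul_cancel₀ _ hs, sub_self]
      rw [sub_eq_zero] at hb'
      exact hb'
    · rintro ⟨c, rfl⟩
      constructor
      · rw [map_smul, hzy, smul_zero]
      · rw [map_smul, LinearMap.smul_apply, hyz, smul_zero]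
  -- n x = 0
  have hnx : n x = 0 := by
    have h := (hsym x b0).1
    rw [hb0] at h
    simp only [map_zero, LinearMap.zero_apply] at h
    rcases smul_eq_zero.mp h.symm with h | h
    · exact h
    · exact absurd h hb00
  have hxy : mul x (mul x x) = 0 := by
    have := (hsym x x).2; rw [hnx, zero_smul] at this; exact this
  have hyx : mul (mul x x) x = 0 := by
    have := (hsym x x).1; rw [hnx, zero_smul] at this; exact this
  -- (x*x)*(x*x) = polar(x, x*x) • x
  have hyy : mul (mul x x) (mul x x) = QuadraticMap.polar (⇑n) x (mul x x) • x := by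
    have := lin1 x x (mul x x)
    rw [hyx] at this
    simpa using this
  have hny : n (mul x x) = 0 := by rw [hcomp, hnx]; ring
  have hsy : QuadraticMap.polar (⇑n) (mul x x) (mul (mul x x) (mul x x)) ≠ 0 := by
    rw [hyy, QuadraticMap.polar_smul_right, smul_eq_mul,
      QuadraticMap.polar_comm (⇑n) (mul x x) x]
    exact mul_ne_zero hnxxx hnxxx
  have part2 := horth x hnx hnxxx
  have part4 : ∀ b : S,
      (mul (mul x x) b = 0 ∧ mul b (mul x x) = 0) ↔ ∃ c : F, b = c • x := by
    intro b
    rw [horth (mul x x) hny hsy b]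
    constructor
    · rintro ⟨c, rfl⟩
      exact ⟨c * QuadraticMap.polar (⇑n) x (mul x x), by rw [hyy, smul_smul]⟩
    · rintro ⟨c, rfl⟩
      refine ⟨c / QuadraticMap.polar (⇑n) x (mul x x), ?_⟩
      rw [hyy, smul_smul, div_mul_cancel₀ _ hnxxx]
  refine ⟨⟨?_, ?_⟩, part2, ⟨hyy, ?_⟩, part4, ⟨hxy, hyx⟩, ?_⟩
  · intro h
    rw [h] at hnxxx
    exact hnxxx (QuadraticMap.polar_zero_right n x)
  · rintro ⟨c, hc⟩
    apply hnxxx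
    rw [hc, QuadraticMap.polar_smul_right, QuadraticMap.polar_self, hnx]
    simp
  · rw [hyy]
    exact smul_ne_zero hnxxx hx0
  · intro b hb hr
    clear hb
    induction hr with
    | refl => exact ⟨1, one_ne_zero, Or.inl (one_smul F x).symm⟩
    | @tail u v hsteps hstep ih =>
      obtain ⟨c, hc, hcu | hcu⟩ := ih
      · obtain ⟨h1, h2, h3⟩ := hstep
        rw [hcu] at h1 h2 h3
        have hx_b : mul x v = 0 := by
          have : c • mul x v = 0 := by
            simpa only [map_smul, LinearMap.smul_apply] using h1
          exact (smul_eq_zero.mp this).resolve_left hc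
        have hb_x : mul v x = 0 := by
          have : c • mul v x = 0 := by
            simpa only [map_smul] using h2
          exact (smul_eq_zero.mp this).resolve_left hc
        obtain ⟨c', hc'⟩ := (part2 v).mp ⟨hx_b, hb_x⟩
        have hc'0 : c' ≠ 0 := by
          rintro rfl
          rw [zero_smul] at hc'
          exact h3 ⟨0, by rw [hc', zero_smul]⟩
        exact ⟨c', hc'0, Or.inr hc'⟩
      · obtain ⟨h1, h2, h3⟩ := hstep
        rw [hcu] at h1 h2 h3
        have hy_b : mul (mul x x) v = 0 := by
          have : c • mul (mul x x) v = 0 := by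
            simpa only [map_smul, LinearMap.smul_apply] using h1
          exact (smul_eq_zero.mp this).resolve_left hc
        have hb_y : mul v (mul x x) = 0 := by
          have : c • mul v (mul x x) = 0 := by
            simpa only [map_smul] using h2
          exact (smul_eq_zero.mp this).resolve_left hc
        obtain ⟨c', hc'⟩ := (part4 v).mp ⟨hy_b, hb_y⟩
        have hc'0 : c' ≠ 0 := by
          rintro rfl
          rw [zero_smul] at hc'
          exact h3 ⟨0, by rw [hc', zero_smul]⟩
        exact ⟨c', hc'0, Or.inl hc'⟩
end

section
/- Let O be an Okubo algebra with isotropic norm over a field F, and let x, y be zero divisors with x*x = y*y = 0 that are linearly independent and not orthogonal to each other (so distance > 1 in the orthogonality graph). Then the distance between [x] and [y] in the orthogonality graph equals 2 if and only if n(x, y) = 0; in that case the intermediate vertex of a length-2 path is unique and equals [y*x] (if y*x ≠ 0) or [x*y] (if x*y ≠ 0). -/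
open Module Submodule LinearMap

section OkuboAux
variable {F S : Type*} [Field F] [AddCommGroup S] [Module F S]
variable (mul : S →ₗ[F] S →ₗ[F] S) (n : QuadraticForm F S)

/-- Linearization of `(a*b)*a = n(a) b`. -/
theorem okubo_idI (hsym : ∀ a b : S, mul (mul a b) a = n a • b ∧ mul a (mul b a) = n a • b)
    (a b c : S) :
    mul (mul a b) c + mul (mul c b) a = QuadraticMap.polar (⇑n) a c • b := by
  have h := (hsym (a + c) b).1
  have ha := (hsym a b).1
  have hc := (hsym c b).1
  simp only [map_add, LinearMap.add_apply] at h
  rw [QuadraticMap.polar, sub_smul, sub_smul, ← h, ← ha, ← hc]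
  abel

/-- Linearization of `a*(b*a) = n(a) b`. -/
theorem okubo_idII (hsym : ∀ a b : S, mul (mul a b) a = n a • b ∧ mul a (mul b a) = n a • b)
    (a b c : S) :
    mul a (mul b c) + mul c (mul b a) = QuadraticMap.polar (⇑n) a c • b := by
  have h := (hsym (a + c) b).2
  have ha := (hsym a b).2
  have hc := (hsym c b).2
  simp only [map_add, LinearMap.add_apply] at h
  rw [QuadraticMap.polar, sub_smul, sub_smul, ← h, ← ha, ← hc]
  abel

/-- A totally isotropic subspace has dimension at most 4. -/
theorem okubo_ti_bound (hdim : Module.finrank F S = 8)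
    (hnd : ∀ a : S, (∀ b : S, QuadraticMap.polar (⇑n) a b = 0) → a = 0)
    (W : Submodule F S)
    (hW : ∀ a ∈ W, ∀ b ∈ W, QuadraticMap.polar (⇑n) a b = 0) :
    Module.finrank F W ≤ 4 := by
  have hfd : FiniteDimensional F S := .of_finrank_pos (by rw [hdim]; norm_num)
  set B : LinearMap.BilinForm F S := n.polarBilin with hB
  have hrefl : B.IsRefl := fun a b h => by
    simpa [hB, QuadraticMap.polar_comm (⇑n) b a] using h
  have hBnd : B.Nondegenerate := hrefl.nondegenerate_iff_separatingLeft.mpr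
    (fun a h => hnd a (fun b => by simpa [hB] using h b))
  have hle : W ≤ B.orthogonal W := by
    intro w hw u hu
    simpa [hB] using hW u hu w hw
  have h1 := LinearMap.BilinForm.finrank_add_finrank_orthogonal hrefl W
  rw [B.orthogonal_top_eq_bot hBnd, inf_bot_eq, finrank_bot, add_zero, hdim] at h1
  have h2 : Module.finrank F W ≤ Module.finrank F (B.orthogonal W) :=
    Submodule.finrank_mono hle
  omega

/-- For a norm-zero nonzero element `u`, left and right multiplication by `u`
have rank 4 and the annihilators coincide with the images. -/
theorem okubo_rank4 (hdim : Module.finrank F S = 8)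
    (hnd : ∀ a : S, (∀ b : S, QuadraticMap.polar (⇑n) a b = 0) → a = 0)
    (hcomp : ∀ a b : S, n (mul a b) = n a * n b)
    (hsym : ∀ a b : S, mul (mul a b) a = n a • b ∧ mul a (mul b a) = n a • b)
    (u : S) (hu : u ≠ 0) (hnu : n u = 0) :
    Module.finrank F (ker (mul u)) = 4 ∧ Module.finrank F (ker (mul.flip u)) = 4 ∧
      ker (mul.flip u) = range (mul u) ∧ ker (mul u) = range (mul.flip u) := by
  have hfd : FiniteDimensional F S := .of_finrank_pos (by rw [hdim]; norm_num)
  have hkerL : Module.finrank F (ker (mul u)) ≤ 4 := by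
    refine okubo_ti_bound n hdim hnd _ (fun a ha b hb => ?_)
    rw [mem_ker] at ha hb
    have h := okubo_idII mul n hsym a u b
    rw [ha, hb, map_zero, map_zero, add_zero] at h
    rcases smul_eq_zero.mp h.symm with h | h
    · exact h
    · exact absurd h hu
  have hkerR : Module.finrank F (ker (mul.flip u)) ≤ 4 := by
    refine okubo_ti_bound n hdim hnd _ (fun a ha b hb => ?_)
    rw [mem_ker] at ha hb
    simp only [LinearMap.flip_apply] at ha hb
    have h := okubo_idI mul n hsym a u b
    rw [ha, hb, map_zero, LinearMap.zero_apply, LinearMap.zero_apply, zero_add] at h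
    rcases smul_eq_zero.mp h.symm with h | h
    · exact h
    · exact absurd h hu
  have hrngL : Module.finrank F (range (mul u)) ≤ 4 := by
    refine okubo_ti_bound n hdim hnd _ (fun a ha b hb => ?_)
    obtain ⟨a', rfl⟩ := mem_range.mp ha
    obtain ⟨b', rfl⟩ := mem_range.mp hb
    have : QuadraticMap.polar (⇑n) (mul u a') (mul u b')
        = n u * QuadraticMap.polar (⇑n) a' b' := by
      rw [QuadraticMap.polar, QuadraticMap.polar, ← map_add, hcomp, hcomp, hcomp]; ring
    rw [this, hnu, zero_mul]
  have hrngR : Module.finrank F (range (mul.flip u)) ≤ 4 := by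
    refine okubo_ti_bound n hdim hnd _ (fun a ha b hb => ?_)
    obtain ⟨a', rfl⟩ := mem_range.mp ha
    obtain ⟨b', rfl⟩ := mem_range.mp hb
    simp only [LinearMap.flip_apply]
    have hadd : mul a' u + mul b' u = mul (a' + b') u := by rw [map_add]; rfl
    have : QuadraticMap.polar (⇑n) (mul a' u) (mul b' u)
        = n u * QuadraticMap.polar (⇑n) a' b' := by
      rw [QuadraticMap.polar, QuadraticMap.polar, hadd, hcomp, hcomp, hcomp]; ring
    rw [this, hnu, zero_mul]
  have hrnL := LinearMap.finrank_range_add_finrank_ker (mul u)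
  have hrnR := LinearMap.finrank_range_add_finrank_ker (mul.flip u)
  rw [hdim] at hrnL hrnR
  have hincl1 : range (mul u) ≤ ker (mul.flip u) := by
    rintro v ⟨b, rfl⟩
    rw [mem_ker, LinearMap.flip_apply, (hsym u b).1, hnu, zero_smul]
  have hincl2 : range (mul.flip u) ≤ ker (mul u) := by
    rintro v ⟨b, rfl⟩
    rw [mem_ker, LinearMap.flip_apply, (hsym u b).2, hnu, zero_smul]
  have e1 : range (mul u) = ker (mul.flip u) :=
    Submodule.eq_of_le_of_finrank_le hincl1 (by omega)
  have e2 : range (mul.flip u) = ker (mul u) :=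
    Submodule.eq_of_le_of_finrank_le hincl2 (by omega)
  refine ⟨by omega, by omega, e1.symm, e2.symm⟩

/-- Key lemma: if `x*y ≠ 0`, `n x = n y = 0`, `v*x = 0` and `y*v = 0`,
then `v` is a scalar multiple of `x*y`. -/
theorem okubo_key (hdim : Module.finrank F S = 8)
    (hnd : ∀ a : S, (∀ b : S, QuadraticMap.polar (⇑n) a b = 0) → a = 0)
    (hcomp : ∀ a b : S, n (mul a b) = n a * n b)
    (hsym : ∀ a b : S, mul (mul a b) a = n a • b ∧ mul a (mul b a) = n a • b)
    (x y v : S) (hx : x ≠ 0) (hy : y ≠ 0) (hnx : n x = 0) (hny : n y = 0)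
    (hxy : mul x y ≠ 0) (hvx : mul v x = 0) (hyv : mul y v = 0) :
    ∃ c : F, v = c • mul x y := by
  have hfd : FiniteDimensional F S := .of_finrank_pos (by rw [hdim]; norm_num)
  set w : S := mul x y with hw
  have hnw : n w = 0 := by rw [hw, hcomp, hnx, zero_mul]
  obtain ⟨hkx4, hkxf4, hkxf, hkxr⟩ := okubo_rank4 mul n hdim hnd hcomp hsym x hx hnx
  obtain ⟨hkw4, hkwf4, hkwf, hkwr⟩ := okubo_rank4 mul n hdim hnd hcomp hsym w hxy hnw
  have hv : v ∈ range (mul x) := by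
    rw [← hkxf, mem_ker, LinearMap.flip_apply]; exact hvx
  obtain ⟨a, ha⟩ := mem_range.mp hv
  set Q : Submodule F S := span F {y} ⊔ ker (mul x) with hQ
  set T : Submodule F S := comap (mul.flip w) (span F {x}) with hT
  have hQT : Q ≤ T := by
    rw [hQ, sup_le_iff]
    constructor
    · rw [span_le, Set.singleton_subset_iff]
      rw [SetLike.mem_coe, mem_comap, LinearMap.flip_apply]
      have : mul y (mul x y) = n y • x := (hsym y x).2
      rw [← hw] at this
      rw [this, hny, zero_smul]
      exact zero_mem _
    · intro k hk
      rw [mem_ker] at hk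
      rw [mem_comap, LinearMap.flip_apply]
      have h := okubo_idII mul n hsym k x y
      rw [hk, map_zero, add_zero, ← hw] at h
      rw [h]
      exact smul_mem _ _ (mem_span_singleton_self x)
  have hQdim : Module.finrank F Q = 5 := by
    have hinf : span F {y} ⊓ ker (mul x) = ⊥ := by
      rw [eq_bot_iff]
      rintro s ⟨hs1, hs2⟩
      obtain ⟨c, rfl⟩ := mem_span_singleton.mp hs1
      rw [SetLike.mem_coe, mem_ker, map_smul] at hs2
      rcases smul_eq_zero.mp hs2 with h | h
      · rw [h, zero_smul]; exact zero_mem _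
      · exact absurd h hxy
    have := Submodule.finrank_sup_add_finrank_inf_eq (span F {y}) (ker (mul x))
    rw [hinf, finrank_bot, add_zero, finrank_span_singleton hy, hkx4] at this
    rw [hQ, this]
  have hTdim : Module.finrank F T ≤ 5 := by
    by_cases hex : ∃ p : S, mul p w = x
    · obtain ⟨p, hp⟩ := hex
      have hTle : T ≤ ker (mul.flip w) ⊔ span F {p} := by
        intro s hs
        rw [hT, mem_comap, LinearMap.flip_apply] at hs
        obtain ⟨c, hc⟩ := mem_span_singleton.mp hs
        have : s - c • p ∈ ker (mul.flip w) := by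
          rw [mem_ker, map_sub, map_smul, LinearMap.flip_apply, LinearMap.flip_apply, hp, ← hc,
            sub_self]
        have hs' : s = (s - c • p) + c • p := by abel
        rw [hs']
        exact add_mem_sup this (smul_mem _ _ (mem_span_singleton_self p))
      have hp0 : p ≠ 0 := by
        rintro rfl
        rw [map_zero, LinearMap.zero_apply] at hp
        exact hx hp.symm
      have h1 : Module.finrank F T ≤
          Module.finrank F ↥(ker (mul.flip w) ⊔ span F {p}) :=
        Submodule.finrank_mono hTle
      have h2 := Submodule.finrank_sup_add_finrank_inf_eq (ker (mul.flip w)) (span F {p})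
      have h3 := finrank_span_singleton (K := F) hp0
      omega
    · have hTle : T ≤ ker (mul.flip w) := by
        intro s hs
        rw [hT, mem_comap, LinearMap.flip_apply] at hs
        obtain ⟨c, hc⟩ := mem_span_singleton.mp hs
        rcases eq_or_ne c 0 with rfl | hc0
        · rw [mem_ker, LinearMap.flip_apply, ← hc, zero_smul]
        · exfalso
          refine hex ⟨c⁻¹ • s, ?_⟩
          rw [map_smul, LinearMap.smul_apply, ← hc, smul_smul, inv_mul_cancel₀ hc0, one_smul]
      exact le_trans (Submodule.finrank_mono hTle) (by omega)
  have hQeqT : Q = T := Submodule.eq_of_le_of_finrank_le hQT (by omega)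
  have haT : a ∈ T := by
    rw [hT, mem_comap, LinearMap.flip_apply]
    have h := okubo_idII mul n hsym y x a
    rw [ha, hyv, zero_add, ← hw] at h
    rw [show mul a w = QuadraticMap.polar (⇑n) y a • x from h]
    exact smul_mem _ _ (mem_span_singleton_self x)
  rw [← hQeqT, hQ] at haT
  obtain ⟨b, hb, k, hk, hbk⟩ := mem_sup.mp haT
  obtain ⟨c, rfl⟩ := mem_span_singleton.mp hb
  rw [mem_ker] at hk
  refine ⟨c, ?_⟩
  rw [← ha, ← hbk, map_add, map_smul, hk, add_zero, hw]

end OkuboAux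

/-- In an Okubo algebra with isotropic norm, for zero divisors
`x, y` with `x*x = y*y = 0` which are linearly independent and not orthogonal
to each other, the distance between `[x]` and `[y]` in the orthogonality graph
equals 2 iff `n(x,y) = 0`; in that case the intermediate vertex of a length-2
path is unique and equals `[y*x]` (if `y*x ≠ 0`) or `[x*y]` (if `x*y ≠ 0`). -/
theorem stmt13 {F S : Type*} [Field F] [AddCommGroup S] [Module F S]
    (hdim : Module.finrank F S = 8)
    (mul : S →ₗ[F] S →ₗ[F] S) (n : QuadraticForm F S)
    (hnd : ∀ a : S, (∀ b : S, QuadraticMap.polar (⇑n) a b = 0) → a = 0)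
    (hcomp : ∀ a b : S, n (mul a b) = n a * n b)
    (hsym : ∀ a b : S, mul (mul a b) a = n a • b ∧ mul a (mul b a) = n a • b)
    (hiso : ∃ a : S, a ≠ 0 ∧ n a = 0)
    (x y : S)
    (hx : x ≠ 0 ∧ (∃ b, b ≠ 0 ∧ mul x b = 0) ∧ (∃ b, b ≠ 0 ∧ mul b x = 0))
    (hy : y ≠ 0 ∧ (∃ b, b ≠ 0 ∧ mul y b = 0) ∧ (∃ b, b ≠ 0 ∧ mul b y = 0))
    (hxx : mul x x = 0) (hyy : mul y y = 0)
    (hind : ∀ c : F, y ≠ c • x)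
    (hnoorth : ¬(mul x y = 0 ∧ mul y x = 0)) :
    ((∃ z : S, (mul x z = 0 ∧ mul z x = 0 ∧ (∀ c : F, z ≠ c • x)) ∧
        (mul z y = 0 ∧ mul y z = 0 ∧ (∀ c : F, y ≠ c • z))) ↔
      QuadraticMap.polar (⇑n) x y = 0) ∧
    (∀ z z' : S,
      (mul x z = 0 ∧ mul z x = 0 ∧ (∀ c : F, z ≠ c • x)) →
      (mul z y = 0 ∧ mul y z = 0 ∧ (∀ c : F, y ≠ c • z)) →
      (mul x z' = 0 ∧ mul z' x = 0 ∧ (∀ c : F, z' ≠ c • x)) →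
      (mul z' y = 0 ∧ mul y z' = 0 ∧ (∀ c : F, y ≠ c • z')) →
      ∃ c : F, z' = c • z) ∧
    (∀ z : S,
      (mul x z = 0 ∧ mul z x = 0 ∧ (∀ c : F, z ≠ c • x)) →
      (mul z y = 0 ∧ mul y z = 0 ∧ (∀ c : F, y ≠ c • z)) →
      (mul y x ≠ 0 → ∃ c : F, z = c • mul y x) ∧
      (mul x y ≠ 0 → ∃ c : F, z = c • mul x y)) := by
  obtain ⟨hx0, -, -⟩ := hx
  obtain ⟨hy0, -, -⟩ := hy
  -- norms of x and y vanish
  have hnx : n x = 0 := by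
    have h := (hsym x x).1
    rw [hxx, map_zero, LinearMap.zero_apply] at h
    rcases smul_eq_zero.mp h.symm with h' | h'
    · exact h'
    · exact absurd h' hx0
  have hny : n y = 0 := by
    have h := (hsym y y).1
    rw [hyy, map_zero, LinearMap.zero_apply] at h
    rcases smul_eq_zero.mp h.symm with h' | h'
    · exact h'
    · exact absurd h' hy0
  -- Part 3 first, as a `have`
  have hpart3 : ∀ z : S,
      (mul x z = 0 ∧ mul z x = 0 ∧ (∀ c : F, z ≠ c • x)) →
      (mul z y = 0 ∧ mul y z = 0 ∧ (∀ c : F, y ≠ c • z)) →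
      (mul y x ≠ 0 → ∃ c : F, z = c • mul y x) ∧
      (mul x y ≠ 0 → ∃ c : F, z = c • mul x y) := by
    rintro z ⟨hxz, hzx, hzi⟩ ⟨hzy, hyz, hyi⟩
    constructor
    · intro hwyx
      exact okubo_key mul n hdim hnd hcomp hsym y x z hy0 hx0 hny hnx hwyx hzy hxz
    · intro hwxy
      exact okubo_key mul n hdim hnd hcomp hsym x y z hx0 hy0 hnx hny hwxy hzx hyz
  refine ⟨⟨?_, ?_⟩, ?_, hpart3⟩
  -- forward direction of the iff
  · rintro ⟨z, ⟨hxz, hzx, hzi⟩, ⟨hzy, hyz, hyi⟩⟩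
    have hz0 : z ≠ 0 := fun h => hzi 0 (by rw [h, zero_smul])
    have h := okubo_idI mul n hsym x z y
    rw [hxz, hyz, map_zero, LinearMap.zero_apply, LinearMap.zero_apply, add_zero] at h
    rcases smul_eq_zero.mp h.symm with h' | h'
    · exact h'
    · exact absurd h' hz0
  -- backward direction: construct the middle vertex
  · intro hp
    have hpyx : QuadraticMap.polar (⇑n) y x = 0 := by
      rw [QuadraticMap.polar_comm]; exact hp
    by_cases hwyx : mul y x ≠ 0
    · -- z = y*x
      set w : S := mul y x with hw
      have hxw : mul x w = 0 := by rw [hw, (hsym x y).2, hnx, zero_smul]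
      have hwx : mul w x = 0 := by
        have h := okubo_idI mul n hsym y x x
        rw [hxx, map_zero, LinearMap.zero_apply, add_zero, hpyx, zero_smul] at h
        exact h
      have hyw : mul y w = 0 := by
        have h := okubo_idII mul n hsym y y x
        rw [hyy, map_zero, add_zero, hpyx, zero_smul] at h
        exact h
      have hwy : mul w y = 0 := by rw [hw, (hsym y x).1, hny, zero_smul]
      refine ⟨w, ⟨hxw, hwx, ?_⟩, hwy, hyw, ?_⟩
      · intro c hc
        have : mul y w = c • (c • x) := by
          rw [hc, map_smul, ← hw, hc]
        rw [hyw, smul_smul] at this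
        rcases mul_self_eq_zero.mp (by
          rcases smul_eq_zero.mp this.symm with h' | h'
          · exact h'
          · exact absurd h' hx0) with h'
        rw [h', zero_smul] at hc
        exact hwyx hc
      · intro c hc
        apply hwyx
        rw [hw]
        nth_rewrite 1 [hc]
        rw [map_smul, LinearMap.smul_apply, hwx, smul_zero]
    · -- y*x = 0, so x*y ≠ 0; z = x*y
      push_neg at hwyx
      have hwxy : mul x y ≠ 0 := by
        intro h
        exact hnoorth ⟨h, hwyx⟩
      set u : S := mul x y with hu
      have hxu : mul x u = 0 := by
        have h := okubo_idII mul n hsym x x y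
        rw [hxx, map_zero, add_zero, hp, zero_smul] at h
        exact h
      have hux : mul u x = 0 := by rw [hu, (hsym x y).1, hnx, zero_smul]
      have huy : mul u y = 0 := by
        have h := okubo_idI mul n hsym x y y
        rw [hyy, map_zero, LinearMap.zero_apply, add_zero, hp, zero_smul] at h
        exact h
      have hyu : mul y u = 0 := by rw [hu, (hsym y x).2, hny, zero_smul]
      refine ⟨u, ⟨hxu, hux, ?_⟩, huy, hyu, ?_⟩
      · intro c hc
        have : mul u y = c • (c • x) := by
          nth_rewrite 1 [hc]
          rw [map_smul, LinearMap.smul_apply, ← hu, hc]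
        rw [huy, smul_smul] at this
        have hc0 : c = 0 := mul_self_eq_zero.mp (by
          rcases smul_eq_zero.mp this.symm with h' | h'
          · exact h'
          · exact absurd h' hx0)
        rw [hc0, zero_smul] at hc
        exact hwxy hc
      · intro c hc
        apply hwxy
        rw [hu]
        nth_rewrite 1 [hc]
        rw [map_smul, hxu, smul_zero]
  -- uniqueness of the middle vertex
  · intro z z' h1 h2 h1' h2'
    have hz0 : z ≠ 0 := fun h => h1.2.2 0 (by rw [h, zero_smul])
    by_cases hwyx : mul y x ≠ 0
    · obtain ⟨c, hc⟩ := (hpart3 z h1 h2).1 hwyx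
      obtain ⟨c', hc'⟩ := (hpart3 z' h1' h2').1 hwyx
      have hc0 : c ≠ 0 := by
        rintro rfl
        rw [zero_smul] at hc
        exact hz0 hc
      refine ⟨c' / c, ?_⟩
      rw [hc', hc, smul_smul, div_mul_cancel₀ _ hc0]
    · push_neg at hwyx
      have hwxy : mul x y ≠ 0 := fun h => hnoorth ⟨h, hwyx⟩
      obtain ⟨c, hc⟩ := (hpart3 z h1 h2).2 hwxy
      obtain ⟨c', hc'⟩ := (hpart3 z' h1' h2').2 hwxy
      have hc0 : c ≠ 0 := by
        rintro rfl
        rw [zero_smul] at hc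
        exact hz0 hc
      refine ⟨c' / c, ?_⟩
      rw [hc', hc, smul_smul, div_mul_cancel₀ _ hc0]
end

section
/- Let O be an Okubo algebra with isotropic norm, and let x, y be linearly independent zero divisors with x*x = y*y = 0 and n(x,y) = 0. Then (x*y)*(x*y) = 0 and (y*x)*(y*x) = 0. -/
/-- In an Okubo algebra with isotropic norm, for linearly
independent zero divisors `x, y` with `x*x = y*y = 0` and `n(x,y) = 0`, one has
`(x*y)*(x*y) = 0` and `(y*x)*(y*x) = 0`. -/
theorem stmt14 {F S : Type*} [Field F] [AddCommGroup S] [Module F S]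
    (hdim : Module.finrank F S = 8)
    (mul : S →ₗ[F] S →ₗ[F] S) (n : QuadraticForm F S)
    (hnd : ∀ a : S, (∀ b : S, QuadraticMap.polar (⇑n) a b = 0) → a = 0)
    (hcomp : ∀ a b : S, n (mul a b) = n a * n b)
    (hsym : ∀ a b : S, mul (mul a b) a = n a • b ∧ mul a (mul b a) = n a • b)
    (hiso : ∃ a : S, a ≠ 0 ∧ n a = 0)
    (x y : S)
    (hx : x ≠ 0 ∧ (∃ b, b ≠ 0 ∧ mul x b = 0) ∧ (∃ b, b ≠ 0 ∧ mul b x = 0))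
    (hy : y ≠ 0 ∧ (∃ b, b ≠ 0 ∧ mul y b = 0) ∧ (∃ b, b ≠ 0 ∧ mul b y = 0))
    (hxx : mul x x = 0) (hyy : mul y y = 0)
    (hind : ∀ c : F, y ≠ c • x)
    (hpolar : QuadraticMap.polar (⇑n) x y = 0) :
    mul (mul x y) (mul x y) = 0 ∧ mul (mul y x) (mul y x) = 0 := by
  -- linearization of (a*b)*a = n(a) b
  have lin1 : ∀ a b c : S,
      mul (mul a b) c + mul (mul c b) a = QuadraticMap.polar (⇑n) a c • b := by
    intro a b c
    have h := (hsym (a + c) b).1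
    have ha := (hsym a b).1
    have hc := (hsym c b).1
    simp only [map_add, LinearMap.add_apply] at h
    rw [ha, hc] at h
    rw [QuadraticMap.polar, sub_smul, sub_smul]
    rw [show ((⇑n) (a + c)) = n (a + c) from rfl]
    rw [← h]
    abel
  -- linearization of a*(b*a) = n(a) b
  have lin2 : ∀ a b c : S,
      mul a (mul b c) + mul c (mul b a) = QuadraticMap.polar (⇑n) a c • b := by
    intro a b c
    have h := (hsym (a + c) b).2
    have ha := (hsym a b).2
    have hc := (hsym c b).2
    simp only [map_add, LinearMap.add_apply] at h
    rw [ha, hc] at h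
    rw [QuadraticMap.polar, sub_smul, sub_smul]
    rw [show ((⇑n) (a + c)) = n (a + c) from rfl]
    rw [← h]
    abel
  have hpolar' : QuadraticMap.polar (⇑n) y x = 0 := by
    rwa [QuadraticMap.polar_comm]
  -- auxiliary: p • y = q • x → p = 0
  have keyA : ∀ p q : F, p • y = q • x → p = 0 := by
    intro p q h
    by_contra hp
    exact hind (p⁻¹ * q) (by rw [mul_smul, ← h, inv_smul_smul₀ hp])
  have keyB : ∀ p q : F, p • x = q • y → p = 0 := by
    intro p q h
    by_contra hp
    have hx0 : x = (p⁻¹ * q) • y := by rw [mul_smul, ← h, inv_smul_smul₀ hp]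
    rcases eq_or_ne (p⁻¹ * q) 0 with h0 | h0
    · exact hx.1 (by rw [hx0, h0, zero_smul])
    · exact hind (p⁻¹ * q)⁻¹ (by rw [hx0, inv_smul_smul₀ h0])
  constructor
  · set u := mul x y with hu
    have huy : mul u u = 0 ∨ True := Or.inr trivial
    have h1 : mul u y = 0 := by
      have := lin1 x y y
      rw [hyy, hpolar, zero_smul, map_zero, LinearMap.zero_apply, add_zero] at this
      exact this
    have h2 : mul x u = 0 := by
      have := lin2 x x y
      rw [hxx, hpolar, zero_smul, map_zero, add_zero] at this
      exact this
    have e1 : mul u u = QuadraticMap.polar (⇑n) x u • y := by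
      have := lin1 x y u
      rw [h1, map_zero, LinearMap.zero_apply, add_zero] at this
      exact this
    have e2 : mul u u = QuadraticMap.polar (⇑n) u y • x := by
      have := lin2 u x y
      rw [h2, map_zero, add_zero] at this
      exact this
    have hp0 : QuadraticMap.polar (⇑n) x u = 0 :=
      keyA _ _ (e1 ▸ e2 ▸ rfl : QuadraticMap.polar (⇑n) x u • y
        = QuadraticMap.polar (⇑n) u y • x)
    rw [e1, hp0, zero_smul]
  · set v := mul y x with hv
    have h1 : mul v x = 0 := by
      have := lin1 y x x
      rw [hxx, hpolar', zero_smul, map_zero, LinearMap.zero_apply, add_zero] at this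
      exact this
    have h2 : mul y v = 0 := by
      have := lin2 y y x
      rw [hyy, hpolar', zero_smul, map_zero, add_zero] at this
      exact this
    have e1 : mul v v = QuadraticMap.polar (⇑n) y v • x := by
      have := lin1 y x v
      rw [h1, map_zero, LinearMap.zero_apply, add_zero] at this
      exact this
    have e2 : mul v v = QuadraticMap.polar (⇑n) v x • y := by
      have := lin2 v y x
      rw [h2, map_zero, add_zero] at this
      exact this
    have hp0 : QuadraticMap.polar (⇑n) y v = 0 :=
      keyB _ _ (e1 ▸ e2 ▸ rfl : QuadraticMap.polar (⇑n) y v • x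
        = QuadraticMap.polar (⇑n) v x • y)
    rw [e1, hp0, zero_smul]
end

section
/- Let O be an Okubo algebra with isotropic norm, and let x, y be zero divisors with x*x = y*y = 0. Then the distance between [x] and [y] in the orthogonality graph is at most 2 if and only if n(x, y) = 0. -/
/-- In an Okubo algebra with isotropic norm, for zero divisors
`x, y` with `x*x = y*y = 0`, the distance between `[x]` and `[y]` in the
orthogonality graph is at most 2 iff `n(x, y) = 0`. -/
theorem stmt15 {F S : Type*} [Field F] [AddCommGroup S] [Module F S]
    (hdim : Module.finrank F S = 8)
    (mul : S →ₗ[F] S →ₗ[F] S) (n : QuadraticForm F S)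
    (hnd : ∀ a : S, (∀ b : S, QuadraticMap.polar (⇑n) a b = 0) → a = 0)
    (hcomp : ∀ a b : S, n (mul a b) = n a * n b)
    (hsym : ∀ a b : S, mul (mul a b) a = n a • b ∧ mul a (mul b a) = n a • b)
    (hiso : ∃ a : S, a ≠ 0 ∧ n a = 0)
    (x y : S)
    (hx : x ≠ 0 ∧ (∃ b, b ≠ 0 ∧ mul x b = 0) ∧ (∃ b, b ≠ 0 ∧ mul b x = 0))
    (hy : y ≠ 0 ∧ (∃ b, b ≠ 0 ∧ mul y b = 0) ∧ (∃ b, b ≠ 0 ∧ mul b y = 0))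
    (hxx : mul x x = 0) (hyy : mul y y = 0) :
    ((∃ c : F, y = c • x) ∨ (mul x y = 0 ∧ mul y x = 0) ∨
      (∃ z : S, (mul x z = 0 ∧ mul z x = 0 ∧ (∀ c : F, z ≠ c • x)) ∧
        (mul z y = 0 ∧ mul y z = 0 ∧ (∀ c : F, y ≠ c • z)))) ↔
      QuadraticMap.polar (⇑n) x y = 0 := by
  -- Linearization of (a*b)*a = n(a)•b in a:
  have I1 : ∀ a b c : S, mul (mul a b) c + mul (mul c b) a
      = QuadraticMap.polar (⇑n) a c • b := by
    intro a b c
    have h1 := (hsym a b).1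
    have h2 := (hsym c b).1
    have h3 := (hsym (a + c) b).1
    simp only [map_add, LinearMap.add_apply] at h3
    rw [QuadraticMap.polar, sub_smul, sub_smul, ← h3, ← h1, ← h2]
    abel
  -- Linearization of a*(b*a) = n(a)•b in a:
  have I2 : ∀ a b c : S, mul a (mul b c) + mul c (mul b a)
      = QuadraticMap.polar (⇑n) a c • b := by
    intro a b c
    have h1 := (hsym a b).2
    have h2 := (hsym c b).2
    have h3 := (hsym (a + c) b).2
    simp only [map_add, LinearMap.add_apply] at h3
    rw [QuadraticMap.polar, sub_smul, sub_smul, ← h3, ← h1, ← h2]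
    abel
  have hnx : n x = 0 := by
    have h := (hsym x x).1
    rw [hxx] at h
    simp only [map_zero, LinearMap.zero_apply] at h
    rcases smul_eq_zero.mp h.symm with h' | h'
    · exact h'
    · exact absurd h' hx.1
  have hny : n y = 0 := by
    have h := (hsym y y).1
    rw [hyy] at h
    simp only [map_zero, LinearMap.zero_apply] at h
    rcases smul_eq_zero.mp h.symm with h' | h'
    · exact h'
    · exact absurd h' hy.1
  have hpc : QuadraticMap.polar (⇑n) y x = QuadraticMap.polar (⇑n) x y :=
    QuadraticMap.polar_comm _ _ _
  constructor
  · rintro (⟨c, rfl⟩ | ⟨h1, h2⟩ | ⟨z, ⟨hxz, hzx, hznx⟩, hzy, hyz, hynz⟩)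
    · rw [QuadraticMap.polar_smul_right, QuadraticMap.polar_self, hnx]
      simp
    · have h := I1 x x y
      rw [hxx, h2] at h
      simp only [map_zero, LinearMap.zero_apply, zero_add] at h
      rcases smul_eq_zero.mp h.symm with h' | h'
      · exact h'
      · exact absurd h' hx.1
    · have hz0 : z ≠ 0 := fun h => hznx 0 (by simp [h])
      have h := I1 x z y
      rw [hxz, hyz] at h
      simp only [map_zero, LinearMap.zero_apply, zero_add] at h
      rcases smul_eq_zero.mp h.symm with h' | h'
      · exact h'
      · exact absurd h' hz0
  · intro hp
    by_cases hv : mul y x = 0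
    · by_cases hu : mul x y = 0
      · exact Or.inr (Or.inl ⟨hu, hv⟩)
      · -- take z = x*y
        have hxu : mul x (mul x y) = 0 := by
          have h := I2 x x y
          rw [hxx, hp] at h
          simpa using h
        have hux : mul (mul x y) x = 0 := by
          rw [(hsym x y).1, hnx, zero_smul]
        have huy : mul (mul x y) y = 0 := by
          have h := I1 x y y
          rw [hyy, hp] at h
          simpa using h
        have hyu : mul y (mul x y) = 0 := by
          rw [(hsym y x).2, hny, zero_smul]
        refine Or.inr (Or.inr ⟨mul x y, ⟨hxu, hux, ?_⟩, huy, hyu, ?_⟩)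
        · intro c hc
          apply hu
          have h : mul (mul x y) y = c • (c • x) := by
            rw [hc, map_smul, LinearMap.smul_apply, hc]
          rw [huy] at h
          rcases smul_eq_zero.mp h.symm with h' | h'
          · rw [hc, h', zero_smul]
          · rcases smul_eq_zero.mp h' with h'' | h''
            · rw [hc, h'', zero_smul]
            · exact absurd h'' hx.1
        · intro c hc
          apply hu
          calc mul x y = mul x (c • mul x y) := by rw [← hc]
            _ = c • mul x (mul x y) := by rw [map_smul]
            _ = 0 := by rw [hxu, smul_zero]
    · -- take z = y*x
      have hxv : mul x (mul y x) = 0 := by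
        rw [(hsym x y).2, hnx, zero_smul]
      have hvx : mul (mul y x) x = 0 := by
        have h := I1 y x x
        rw [hxx, hpc, hp] at h
        simpa using h
      have hvy : mul (mul y x) y = 0 := by
        rw [(hsym y x).1, hny, zero_smul]
      have hyv : mul y (mul y x) = 0 := by
        have h := I2 y y x
        rw [hyy, hpc, hp] at h
        simpa using h
      refine Or.inr (Or.inr ⟨mul y x, ⟨hxv, hvx, ?_⟩, hvy, hyv, ?_⟩)
      · intro c hc
        apply hv
        have h : mul y (mul y x) = c • (c • x) := by
          rw [hc, map_smul, hc]
        rw [hyv] at h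
        rcases smul_eq_zero.mp h.symm with h' | h'
        · rw [hc, h', zero_smul]
        · rcases smul_eq_zero.mp h' with h'' | h''
          · rw [hc, h'', zero_smul]
          · exact absurd h'' hx.1
      · intro c hc
        apply hv
        calc mul y x = mul (c • mul y x) x := by rw [← hc]
          _ = c • mul (mul y x) x := by rw [map_smul, LinearMap.smul_apply]
          _ = 0 := by rw [hvx, smul_zero]
end

section
/- Let (C, ·, n) be a Hurwitz algebra (unital composition algebra) over a field F with standard conjugation x̄ = n(1,x)·1 − x, and let τ be an algebra automorphism of C with τ³ = id. Define a new product x * y = τ(x̄) · τ²(ȳ). Then (C, *, n) is a symmetric composition algebra: n(x*y) = n(x)n(y) and n(x*y, z) = n(x, y*z) for all x, y, z. -/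
/-- Let `(C, ·, n)` be a Hurwitz algebra with unit `e`, standard
conjugation `x̄ = n(e,x) • e − x`, and `τ` an algebra automorphism with `τ³ = id`.
Then the Petersson product `x * y = τ(x̄) · τ²(ȳ)` makes `(C, *, n)` a symmetric
composition algebra: `n(x*y) = n(x)n(y)` and `n(x*y, z) = n(x, y*z)`. -/
theorem stmt16 {F S : Type*} [Field F] [AddCommGroup S] [Module F S]
    (mul : S →ₗ[F] S →ₗ[F] S) (e : S)
    (hel : ∀ x : S, mul e x = x) (her : ∀ x : S, mul x e = x)
    (n : QuadraticForm F S)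
    (hnd : ∀ a : S, (∀ b : S, QuadraticMap.polar (⇑n) a b = 0) → a = 0)
    (hcomp : ∀ a b : S, n (mul a b) = n a * n b)
    (τ : S ≃ₗ[F] S) (hτmul : ∀ a b : S, τ (mul a b) = mul (τ a) (τ b))
    (hτ3 : ∀ a : S, τ (τ (τ a)) = a) :
    let conj : S → S := fun a => QuadraticMap.polar (⇑n) e a • e - a
    let pm : S → S → S := fun a b => mul (τ (conj a)) (τ (τ (conj b)))
    (∀ x y : S, n (pm x y) = n x * n y) ∧
    (∀ x y z : S, QuadraticMap.polar (⇑n) (pm x y) z = QuadraticMap.polar (⇑n) x (pm y z)) := by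
  intro conj pm
  set P : S → S → F := QuadraticMap.polar (⇑n) with hPdef
  have hP : ∀ a b : S, P a b = n (a + b) - n a - n b := fun a b => rfl
  have hnee : n e = n e * n e := by
    have := hcomp e e; rwa [hel] at this
  by_cases h1 : n e = 1
  case neg =>
    -- degenerate case : n e ≠ 1 forces n e = 0, everything trivial
    have h0 : n e * (n e - 1) = 0 := by rw [mul_sub, mul_one, ← hnee, sub_self]
    have he0 : n e = 0 := by
      rcases mul_eq_zero.mp h0 with h | h
      · exact h
      · exact absurd (by linear_combination h) h1
    have hzero : ∀ x : S, n x = 0 := fun x => by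
      have := hcomp e x; rw [hel, he0, zero_mul] at this; exact this
    have hpz : ∀ a b : S, P a b = 0 := fun a b => by
      rw [hP, hzero, hzero, hzero]; ring
    constructor
    · intro x y; rw [hzero, hzero, hzero]; ring
    · intro x y z; rw [hpz, hpz]
  case pos =>
    -- main case : n e = 1
    -- bilinearity of P
    have hPal : ∀ a b c : S, P (a + b) c = P a c + P b c := fun a b c =>
      QuadraticMap.polar_add_left n a b c
    have hPar : ∀ a b c : S, P a (b + c) = P a b + P a c := fun a b c =>
      QuadraticMap.polar_add_right n a b c
    have hPsl : ∀ (r : F) (a b : S), P (r • a) b = r * P a b := fun r a b => by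
      have h := QuadraticMap.polar_smul_left (Q := n) r a b
      rw [smul_eq_mul] at h; exact h
    have hPsr : ∀ (r : F) (a b : S), P a (r • b) = r * P a b := fun r a b => by
      have h := QuadraticMap.polar_smul_right (Q := n) r a b
      rw [smul_eq_mul] at h; exact h
    have hPsubl : ∀ a b c : S, P (a - b) c = P a c - P b c := fun a b c =>
      QuadraticMap.polar_sub_left n a b c
    have hPsubr : ∀ a b c : S, P a (b - c) = P a b - P a c := fun a b c =>
      QuadraticMap.polar_sub_right n a b c
    have hPcomm : ∀ a b : S, P a b = P b a := fun a b => QuadraticMap.polar_comm (⇑n) a b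
    -- product expansions
    have hml : ∀ a b c : S, mul (a + b) c = mul a c + mul b c := fun a b c => by
      rw [map_add]; rfl
    have hmr : ∀ a b c : S, mul a (b + c) = mul a b + mul a c := fun a b c => map_add _ b c
    have hmsl : ∀ (r : F) (a b : S), mul (r • a) b = r • mul a b := fun r a b => by
      rw [map_smul]; rfl
    have hmsr : ∀ (r : F) (a b : S), mul a (r • b) = r • mul a b := fun r a b => map_smul _ r b
    have hmsubl : ∀ a b c : S, mul (a - b) c = mul a c - mul b c := fun a b c => by
      rw [map_sub]; rfl
    have hmsubr : ∀ a b c : S, mul a (b - c) = mul a b - mul a c := fun a b c => map_sub _ b c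
    -- linearizations of the composition law
    have L1 : ∀ a b c : S, P (mul a b) (mul a c) = n a * (P b c) := fun a b c => by
      rw [hP, hP, ← hmr, hcomp, hcomp, hcomp]; ring
    have L2 : ∀ a b c : S, P (mul a c) (mul b c) = P a b * n c := fun a b c => by
      rw [hP, hP, ← hml, hcomp, hcomp, hcomp]; ring
    have L3 : ∀ a b c d : S, P (mul a c) (mul b d) + P (mul a d) (mul b c)
        = P a b * P c d := fun a b c d => by
      have h := L2 a b (c + d)
      rw [hmr, hmr, hPal, hPar, hPar, L2 a b c, L2 a b d] at h
      rw [hP c d]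
      linear_combination h
    have hconj : ∀ a : S, conj a = P e a • e - a := fun a => rfl
    have hA0 : ∀ a b c : S, P (mul a b) c + P (mul a c) b = P e a * P b c := fun a b c => by
      have h := L3 a e b c
      rw [hel, hel, hPcomm a e] at h
      exact h
    have hB0 : ∀ a b c : S, P (mul a b) c + P a (mul c b) = P a c * P e b := fun a b c => by
      have h := L3 a c b e
      rw [her, her, hPcomm b e] at h
      exact h
    have hA : ∀ a b c : S, P (mul a b) c = P b (mul (conj a) c) := fun a b c => by
      rw [hconj, hmsubl, hmsl, hel, hPsubr, hPsr]
      linear_combination hA0 a b c - hPcomm (mul a c) b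
    have hB : ∀ a b c : S, P (mul a b) c = P a (mul c (conj b)) := fun a b c => by
      rw [hconj, hmsubr, hmsr, her, hPsubr, hPsr]
      linear_combination hB0 a b c
    -- polar of e with e
    have hnsmul : ∀ (r : F), n (r • e) = r * r := fun r => by
      rw [QuadraticMap.map_smul, h1]
      simp [smul_eq_mul]
    have hPee : P e e = 2 := by
      rw [hP, ← two_smul F e, hnsmul, h1]; norm_num
    have htconj : ∀ a : S, P e (conj a) = P e a := fun a => by
      rw [hconj, hPsubr, hPsr, hPee]; ring
    have hconjconj : ∀ a : S, conj (conj a) = a := fun a => by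
      rw [hconj (conj a), htconj, hconj]; abel
    have hPaa : ∀ a : S, P a a = 2 * n a := fun a => by
      have h := QuadraticMap.polar_self n a
      rw [two_smul] at h
      exact h.trans (two_mul (n a)).symm
    have hnconj : ∀ a : S, n (conj a) = n a := fun a => by
      have h2 := hP (conj a) a
      rw [hconj, sub_add_cancel] at h2
      have h3 : P (P e a • e - a) a = P e a * P e a - 2 * n a := by
        rw [hPsubl, hPsl, hPaa]
      have h6 := hnsmul (P e a)
      rw [hconj]
      linear_combination h2 - h3 + h6
    -- τ fixes e
    have hτe : τ e = e := by
      have hUnit : ∀ y : S, mul (τ e) y = y := fun y => by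
        have h := hτmul e (τ (τ y))
        rw [hel, hτ3] at h
        exact h.symm
      have h := her (τ e)
      rw [hUnit e] at h
      exact h.symm
    -- x * conj x = n x • e
    have hmulconj : ∀ x : S, mul x (conj x) = n x • e := fun x => by
      have key : ∀ b : S, P (mul x (conj x) - n x • e) b = 0 := fun b => by
        rw [hPsubl, hPsl]
        have ha := hA x (conj x) b
        have hb : P (conj x) (mul (conj x) b) = n (conj x) * P e b := by
          have h := L1 (conj x) e b
          rwa [her] at h
        rw [ha, hb, hnconj]
        ring
      exact sub_eq_zero.mp (hnd _ key)
    -- e nonzero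
    have hene : e ≠ 0 := fun h => by
      rw [h, map_zero] at h1; exact one_ne_zero h1.symm
    -- τ preserves trace and norm
    have hτtn : ∀ x : S, P e (τ x) = P e x ∧ n (τ x) = n x := fun x => by
      have hτconjx : τ (conj x) = P e x • e - τ x := by
        rw [hconj, map_sub, map_smul, hτe]
      have h1' : mul (τ x) (P e x • e - τ x) = n x • e := by
        rw [← hτconjx, ← hτmul, hmulconj, map_smul, hτe]
      have h2' : mul (τ x) (P e (τ x) • e - τ x) = n (τ x) • e := by
        rw [← hconj, hmulconj]
      have key : (P e x - P e (τ x)) • τ x = (n x - n (τ x)) • e := by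
        have hsplit : (P e x - P e (τ x)) • e
            = (P e x • e - τ x) - (P e (τ x) • e - τ x) := by
          rw [sub_smul]; abel
        have h3 : mul (τ x) ((P e x - P e (τ x)) • e) = (n x - n (τ x)) • e := by
          rw [hsplit, hmsubr, h1', h2', ← sub_smul]
        rwa [hmsr, her] at h3
      have hs : P e x - P e (τ x) = 0 := by
        by_contra hs
        have h4 : τ x = ((P e x - P e (τ x))⁻¹ * (n x - n (τ x))) • e := by
          have h5 := congrArg (fun v => (P e x - P e (τ x))⁻¹ • v) key
          simp only [smul_smul] at h5
          rwa [inv_mul_cancel₀ hs, one_smul] at h5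
        have h6 : x = ((P e x - P e (τ x))⁻¹ * (n x - n (τ x))) • e := by
          have h7 := hτ3 x
          rw [h4, map_smul, hτe, map_smul, hτe] at h7
          exact h7.symm
        have h8 : τ x = x := h4.trans h6.symm
        rw [h8] at hs
        exact hs (sub_self _)
      have hr : n x - n (τ x) = 0 := by
        rw [hs, zero_smul] at key
        rcases smul_eq_zero.mp key.symm with h | h
        · exact h
        · exact absurd h hene
      exact ⟨(sub_eq_zero.mp hs).symm, (sub_eq_zero.mp hr).symm⟩
    have hτt : ∀ x : S, P e (τ x) = P e x := fun x => (hτtn x).1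
    have hτn : ∀ x : S, n (τ x) = n x := fun x => (hτtn x).2
    have hτconj : ∀ x : S, τ (conj x) = conj (τ x) := fun x => by
      rw [hconj, hconj, map_sub, map_smul, hτe, hτt]
    have hiso : ∀ a b : S, P (τ a) (τ b) = P a b := fun a b => by
      rw [hP, hP, ← map_add, hτn, hτn, hτn]
    -- conclusion
    constructor
    · intro x y
      show n (mul (τ (conj x)) (τ (τ (conj y)))) = n x * n y
      rw [hcomp, hτn, hτn, hτn, hnconj, hnconj]
    · intro x y z
      show P (mul (τ (conj x)) (τ (τ (conj y)))) z
        = P x (mul (τ (conj y)) (τ (τ (conj z))))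
      have lhs : P (mul (τ (conj x)) (τ (τ (conj y)))) z
          = P (conj y) (mul (τ (τ x)) (τ z)) := by
        rw [hA, ← hτconj, hconjconj]
        rw [← hiso (τ (τ (conj y))) (mul (τ x) z), hτ3 (conj y), hτmul]
      have rhs : P x (mul (τ (conj y)) (τ (τ (conj z))))
          = P (conj y) (mul (τ (τ x)) (τ z)) := by
        rw [hPcomm x, hB, ← hτconj, ← hτconj, hconjconj]
        rw [← hiso (τ (conj y)) (mul x (τ (τ z)))]
        rw [← hiso (τ (τ (conj y))) (τ (mul x (τ (τ z))))]
        rw [hτ3 (conj y), hτmul, hτ3 z, hτmul]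
      rw [lhs, rhs]
end

section
/- Let (S, *, n) be a symmetric composition algebra and e a nonzero idempotent (e*e = e). Then n(e) = 1, the map τ(x) = e*(e*x) satisfies τ(x) = n(e,x)·e − x*e for all x, τ is an automorphism of (S, *), and τ³ = id. -/
/-- In a symmetric composition algebra with a nonzero idempotent `e`:
`n(e) = 1`; the map `τ(x) = e*(e*x)` satisfies `τ(x) = n(e,x) • e − x*e`; `τ` is an
automorphism of `(S, *)`; and `τ³ = id`. -/
theorem stmt17 {F S : Type*} [Field F] [AddCommGroup S] [Module F S]
    (mul : S →ₗ[F] S →ₗ[F] S) (n : QuadraticForm F S)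
    (hnd : ∀ a : S, (∀ b : S, QuadraticMap.polar (⇑n) a b = 0) → a = 0)
    (hcomp : ∀ a b : S, n (mul a b) = n a * n b)
    (hsym : ∀ a b : S, mul (mul a b) a = n a • b ∧ mul a (mul b a) = n a • b)
    (e : S) (he : mul e e = e) (he0 : e ≠ 0) :
    n e = 1 ∧
    (∀ x : S, mul e (mul e x) = QuadraticMap.polar (⇑n) e x • e - mul x e) ∧
    Function.Bijective (fun x : S => mul e (mul e x)) ∧
    (∀ x y : S, mul e (mul e (mul x y)) =
      mul (mul e (mul e x)) (mul e (mul e y))) ∧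
    (∀ x : S, mul e (mul e (mul e (mul e (mul e (mul e x))))) = x) := by
  -- polar is definitionally n(a+b) - n a - n b
  have hpolar : ∀ a b : S, QuadraticMap.polar (⇑n) a b = n (a + b) - n a - n b :=
    fun a b => rfl
  have hpc : ∀ a b : S, QuadraticMap.polar (⇑n) a b = QuadraticMap.polar (⇑n) b a := by
    intro a b; rw [hpolar, hpolar, add_comm a b]; ring
  -- n e = 1
  have hne : n e = 1 := by
    have h1 : mul (mul e e) e = n e • e := (hsym e e).1
    rw [he, he] at h1
    have h2 : (n e - 1) • e = 0 := by
      rw [sub_smul, one_smul, ← h1, sub_self]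
    rcases smul_eq_zero.mp h2 with h | h
    · exact sub_eq_zero.mp h
    · exact absurd h he0
  -- linearization of the first identity
  have lin1 : ∀ x y z : S, mul (mul x y) z + mul (mul z y) x
      = QuadraticMap.polar (⇑n) x z • y := by
    intro x y z
    have h := (hsym (x + z) y).1
    simp only [map_add, LinearMap.add_apply] at h
    rw [(hsym x y).1, (hsym z y).1] at h
    rw [hpolar, sub_smul, sub_smul, ← h]
    abel
  -- linearization of the second identity
  have lin2 : ∀ x y z : S, mul x (mul y z) + mul z (mul y x)
      = QuadraticMap.polar (⇑n) x z • y := by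
    intro x y z
    have h := (hsym (x + z) y).2
    simp only [map_add, LinearMap.add_apply] at h
    rw [(hsym x y).2, (hsym z y).2] at h
    rw [hpolar, sub_smul, sub_smul, ← h]
    abel
  -- polarization of the composition law in each slot
  have hrc : ∀ a b c : S, QuadraticMap.polar (⇑n) (mul a c) (mul b c)
      = QuadraticMap.polar (⇑n) a b * n c := by
    intro a b c
    have hadd : mul a c + mul b c = mul (a + b) c := by
      simp [map_add]
    rw [hpolar, hpolar, hadd, hcomp, hcomp, hcomp]; ring
  have hlc : ∀ a b c : S, QuadraticMap.polar (⇑n) (mul a b) (mul a c)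
      = n a * QuadraticMap.polar (⇑n) b c := by
    intro a b c
    have hadd : mul a b + mul a c = mul a (b + c) := (map_add _ _ _).symm
    rw [hpolar, hpolar, hadd, hcomp, hcomp, hcomp]; ring
  -- the key formula for τ
  have htau : ∀ x : S, mul e (mul e x)
      = QuadraticMap.polar (⇑n) e x • e - mul x e := by
    intro x
    have h := lin2 e e x
    rw [he] at h
    exact eq_sub_of_add_eq h
  -- left/right multiplication by e are mutually inverse
  have hLR : ∀ z : S, mul e (mul z e) = z := by
    intro z; rw [(hsym e z).2, hne, one_smul]
  have hRL : ∀ z : S, mul (mul e z) e = z := by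
    intro z; rw [(hsym e z).1, hne, one_smul]
  -- (x*e)*e = n(x,e) e - e*x
  have hRe : ∀ x : S, mul (mul x e) e
      = QuadraticMap.polar (⇑n) x e • e - mul e x := by
    intro x
    have h := lin1 x e e
    rw [he] at h
    exact eq_sub_of_add_eq h
  -- various polar values
  have hpxe : ∀ x : S, QuadraticMap.polar (⇑n) (mul x e) e
      = QuadraticMap.polar (⇑n) x e := by
    intro x
    have h := hrc x e e
    rwa [he, hne, mul_one] at h
  have hpeXe : ∀ x : S, QuadraticMap.polar (⇑n) e (mul x e)
      = QuadraticMap.polar (⇑n) e x := by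
    intro x
    have h := hrc e x e
    rwa [he, hne, mul_one] at h
  have hpeex : ∀ x : S, QuadraticMap.polar (⇑n) e (mul e x)
      = QuadraticMap.polar (⇑n) e x := by
    intro x
    have h := hlc e e x
    rwa [he, hne, one_mul] at h
  -- key identity: (x*e)*(y*e)
  have hkey : ∀ x y : S, mul (mul x e) (mul y e)
      = QuadraticMap.polar (⇑n) e x • y
        - QuadraticMap.polar (⇑n) e y • mul e x
        + mul e (mul e (mul x y)) := by
    intro x y
    have hB : mul y (mul x e)
        = QuadraticMap.polar (⇑n) e y • x - mul e (mul x y) := by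
      have h := lin2 y x e
      rw [hpc y e] at h
      exact eq_sub_of_add_eq h
    have hA := lin2 (mul x e) y e
    rw [hpxe x, hpc x e, hB, map_sub, map_smul] at hA
    have h := eq_sub_of_add_eq hA
    rw [h]; abel
  -- multiplicativity of τ
  have hmul : ∀ x y : S, mul e (mul e (mul x y))
      = mul (mul e (mul e x)) (mul e (mul e y)) := by
    intro x y
    rw [htau x, htau y]
    simp only [map_sub, map_smul, LinearMap.sub_apply, LinearMap.smul_apply,
      smul_sub, smul_smul]
    rw [he, hLR y, hRe x, hkey x y, hpc x e]
    module
  -- τ e = e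
  have hte : mul e (mul e e) = e := by rw [he, he]
  -- τ(x*e) = e*x
  have hT1 : ∀ x : S, mul e (mul e (mul x e)) = mul e x := by
    intro x
    rw [htau (mul x e), hpeXe x, hRe x, hpc x e]
    abel
  -- τ² x = n(e,x) e - e*x
  have ht2 : ∀ x : S, mul e (mul e (mul e (mul e x)))
      = QuadraticMap.polar (⇑n) e x • e - mul e x := by
    intro x
    rw [htau x]
    simp only [map_sub, map_smul]
    rw [he, hT1 x, he]
  -- τ(e*x) = n(e,x) e - x
  have hT2 : ∀ x : S, mul e (mul e (mul e x))
      = QuadraticMap.polar (⇑n) e x • e - x := by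
    intro x
    rw [htau (mul e x), hpeex x, hRL x]
  -- τ³ = id
  have ht3 : ∀ x : S, mul e (mul e (mul e (mul e (mul e (mul e x))))) = x := by
    intro x
    rw [ht2 x]
    simp only [map_sub, map_smul]
    rw [he, he, hT2 x]
    abel
  refine ⟨hne, htau, ?_, hmul, ht3⟩
  exact Function.bijective_iff_has_inverse.mpr
    ⟨fun x => mul e (mul e (mul e (mul e x))), fun x => ht3 x, fun x => ht3 x⟩
end

section
/- Let (S, *, n) be a symmetric composition algebra and e a nonzero idempotent. Define x · y = (e*x)*(y*e). Then (S, ·, n) is a Hurwitz algebra with unit element e: e·x = x·e = x for all x, and n(x·y) = n(x)n(y). -/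
/-- In a symmetric composition algebra with a nonzero idempotent `e`,
the product `x · y = (e*x)*(y*e)` makes `S` a Hurwitz algebra with unit `e`:
`e·x = x·e = x` and `n(x·y) = n(x)n(y)`. -/
theorem stmt18 {F S : Type*} [Field F] [AddCommGroup S] [Module F S]
    (mul : S →ₗ[F] S →ₗ[F] S) (n : QuadraticForm F S)
    (hnd : ∀ a : S, (∀ b : S, QuadraticMap.polar (⇑n) a b = 0) → a = 0)
    (hcomp : ∀ a b : S, n (mul a b) = n a * n b)
    (hsym : ∀ a b : S, mul (mul a b) a = n a • b ∧ mul a (mul b a) = n a • b)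
    (e : S) (he : mul e e = e) (he0 : e ≠ 0) :
    let dm : S → S → S := fun a b => mul (mul e a) (mul b e)
    (∀ x : S, dm e x = x ∧ dm x e = x) ∧
    (∀ x y : S, n (dm x y) = n x * n y) := by
  intro dm
  have hne : n e = 1 := by
    have h1 : mul (mul e e) e = n e • e := (hsym e e).1
    rw [he, he] at h1
    have h2 : (n e - 1) • e = 0 := by rw [sub_smul, one_smul, ← h1, sub_self]
    rcases smul_eq_zero.mp h2 with h | h
    · exact sub_eq_zero.mp h
    · exact absurd h he0
  constructor
  · intro x
    constructor
    · show mul (mul e e) (mul x e) = x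
      rw [he, (hsym e x).2, hne, one_smul]
    · show mul (mul e x) (mul e e) = x
      rw [he, (hsym e x).1, hne, one_smul]
  · intro x y
    show n (mul (mul e x) (mul y e)) = n x * n y
    rw [hcomp, hcomp, hcomp, hne]
    ring
end

section
/- In the Okubo algebra O_{α,β} over a field F (with α, β nonzero), given by the 8-dimensional algebra with basis z_{i,j} (0 ≤ i,j ≤ 2, (i,j) ≠ (0,0)) and the standard Okubo multiplication table, the element x = z_{0,2} + z_{1,2} + z_{2,2} with α = 1 satisfies x * x = 0, and for y = γ(z_{0,1} − z_{1,1}) + δ(z_{0,1} − z_{2,1}), one has y * y = (γ² + γδ + δ²)·x. Consequently, there exists nonzero y in span{z_{0,1} − z_{1,1}, z_{0,1} − z_{2,1}} with y*y = 0 if and only if char F = 3 or F contains a primitive cube root of unity. -/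
noncomputable section

/-- Basis vector `z_{i,j}` of the Okubo algebra `O_{1,β}`, with indices ordered as
`z10, z20, z01, z02, z11, z22, z12, z21`. -/
def zz {F : Type*} [Field F] (k : Fin 8) : Fin 8 → F := Pi.single k 1

/-- Products of basis vectors in `O_{1,β}` (parameter `b = β`, `α = 1`), following
the standard Okubo multiplication table. -/
def okT {F : Type*} [Field F] (b : F) : Fin 8 → Fin 8 → (Fin 8 → F) :=
  ![![zz 1, 0, -zz 4, 0, -zz 7, 0, 0, -zz 2],
    ![0, zz 0, 0, -zz 5, 0, -zz 6, -zz 3, 0],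
    ![0, -zz 7, zz 3, 0, 0, -(b • zz 1), 0, -zz 5],
    ![-zz 6, 0, 0, b • zz 2, -(b • zz 0), 0, -(b • zz 4), 0],
    ![0, -zz 2, -zz 6, 0, zz 5, 0, -(b • zz 1), 0],
    ![-zz 3, 0, 0, -(b • zz 7), 0, b • zz 4, 0, -(b • zz 0)],
    ![-zz 5, 0, -(b • zz 0), 0, 0, -(b • zz 2), b • zz 7, 0],
    ![0, -zz 4, 0, -(b • zz 1), -zz 3, 0, 0, zz 6]]

/-- The bilinear multiplication of `O_{1,β}` extending the table `okT`. -/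
def okMul {F : Type*} [Field F] (b : F) (x y : Fin 8 → F) : Fin 8 → F :=
  ∑ i : Fin 8, ∑ j : Fin 8, (x i * y j) • okT b i j

set_option maxHeartbeats 1000000 in
lemma okYY {F : Type*} [Field F] (b : F) (γ δ : F) :
      okMul b (γ • (zz 2 - zz 4) + δ • (zz 2 - zz 7))
          (γ • (zz 2 - zz 4) + δ • (zz 2 - zz 7)) =
        (γ ^ 2 + γ * δ + δ ^ 2) • ((zz 3 + zz 6 + zz 5) : Fin 8 → F) := by
  have hz : ∀ (k i : Fin 8), (zz k : Fin 8 → F) i = if i = k then 1 else 0 := by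
    intro k i; simp [zz, Pi.single_apply]
  simp only [okMul, Fin.sum_univ_eight, Pi.add_apply, Pi.sub_apply, Pi.smul_apply,
    smul_eq_mul, hz]
  norm_num
  have e22 : okT b 2 2 = (zz 3 : Fin 8 → F) := rfl
  have e27 : okT b 2 7 = -(zz 5 : Fin 8 → F) := rfl
  have e42 : okT b 4 2 = -(zz 6 : Fin 8 → F) := rfl
  have e44 : okT b 4 4 = (zz 5 : Fin 8 → F) := rfl
  have e74 : okT b 7 4 = -(zz 3 : Fin 8 → F) := rfl
  have e77 : okT b 7 7 = (zz 6 : Fin 8 → F) := rfl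
  have e24 : okT b 2 4 = (0 : Fin 8 → F) := rfl
  have e47 : okT b 4 7 = (0 : Fin 8 → F) := rfl
  have e72 : okT b 7 2 = (0 : Fin 8 → F) := rfl
  rw [e22, e27, e42, e44, e74, e77, e24, e47, e72]
  funext k
  simp [hz]
  split_ifs <;> ring

set_option maxHeartbeats 1000000 in
lemma okXX {F : Type*} [Field F] (b : F) :
    okMul b (zz 3 + zz 6 + zz 5) (zz 3 + zz 6 + zz 5) = (0 : Fin 8 → F) := by
  have hz : ∀ (k i : Fin 8), (zz k : Fin 8 → F) i = if i = k then 1 else 0 := by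
    intro k i; simp [zz, Pi.single_apply]
  simp only [okMul, Fin.sum_univ_eight, Pi.add_apply, hz]
  have e33 : okT b 3 3 = (b • zz 2 : Fin 8 → F) := rfl
  have e36 : okT b 3 6 = -(b • zz 4 : Fin 8 → F) := rfl
  have e35 : okT b 3 5 = (0 : Fin 8 → F) := rfl
  have e53 : okT b 5 3 = -(b • zz 7 : Fin 8 → F) := rfl
  have e55 : okT b 5 5 = (b • zz 4 : Fin 8 → F) := rfl
  have e56 : okT b 5 6 = (0 : Fin 8 → F) := rfl
  have e63 : okT b 6 3 = (0 : Fin 8 → F) := rfl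
  have e65 : okT b 6 5 = -(b • zz 2 : Fin 8 → F) := rfl
  have e66 : okT b 6 6 = (b • zz 7 : Fin 8 → F) := rfl
  rw [e33, e36, e35, e53, e55, e56, e63, e65, e66]
  funext k
  simp [hz]
  split_ifs <;> ring

/-- In `O_{1,β}`, the element `x = z_{0,2} + z_{1,2} + z_{2,2}`
satisfies `x*x = 0`; for `y = γ(z_{0,1} − z_{1,1}) + δ(z_{0,1} − z_{2,1})` one has
`y*y = (γ² + γδ + δ²) • x`; and there is a nonzero such `y` with `y*y = 0` iff
`char F = 3` or `F` contains a primitive cube root of unity. -/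
theorem stmt19 {F : Type*} [Field F] (b : F) (hb : b ≠ 0) :
    okMul b (zz 3 + zz 6 + zz 5) (zz 3 + zz 6 + zz 5) = (0 : Fin 8 → F) ∧
    (∀ γ δ : F,
      okMul b (γ • (zz 2 - zz 4) + δ • (zz 2 - zz 7))
          (γ • (zz 2 - zz 4) + δ • (zz 2 - zz 7)) =
        (γ ^ 2 + γ * δ + δ ^ 2) • (zz 3 + zz 6 + zz 5)) ∧
    ((∃ γ δ : F, ¬(γ = 0 ∧ δ = 0) ∧
        okMul b (γ • (zz 2 - zz 4) + δ • (zz 2 - zz 7))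
          (γ • (zz 2 - zz 4) + δ • (zz 2 - zz 7)) = 0) ↔
      (ringChar F = 3 ∨ ∃ ω : F, IsPrimitiveRoot ω 3)) := by
  refine ⟨okXX b, fun γ δ => okYY b γ δ, ?_, ?_⟩
  · -- forward direction
    rintro ⟨γ, δ, hne, h0⟩
    rw [okYY] at h0
    have hx3 : ((zz 3 + zz 6 + zz 5 : Fin 8 → F)) 3 = 1 := by
      simp [zz, Pi.single_apply]
    have hc : γ ^ 2 + γ * δ + δ ^ 2 = 0 := by
      have := congrFun h0 3
      simpa [hx3] using this
    by_cases hδ : δ = 0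
    · subst hδ
      have hγ : γ = 0 := by
        have : γ ^ 2 = 0 := by linear_combination hc
        exact pow_eq_zero_iff (n := 2) (by norm_num) |>.mp this
      exact absurd ⟨hγ, rfl⟩ hne
    · set t : F := γ / δ with ht_def
      have ht : t ^ 2 + t + 1 = 0 := by
        field_simp [ht_def]
        have hinv : δ * δ⁻¹ = 1 := mul_inv_cancel₀ hδ
        linear_combination (δ⁻¹) ^ 2 * hc + (-(γ * δ⁻¹ + 1 + δ * δ⁻¹)) * hinv
      have ht3 : t ^ 3 = 1 := by linear_combination (t - 1) * ht
      by_cases ht1 : t = 1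
      · left
        have h3 : (3 : F) = 0 := by
          rw [ht1] at ht; linear_combination ht
        have hdvd : ringChar F ∣ 3 := by
          rw [← ringChar.spec]; exact_mod_cast h3
        rcases (Nat.prime_three.eq_one_or_self_of_dvd _ hdvd) with h | h
        · exact absurd h CharP.ringChar_ne_one
        · exact h
      · right
        refine ⟨t, ?_⟩
        have h1 : orderOf t ∣ 3 := orderOf_dvd_of_pow_eq_one ht3
        have h2 : orderOf t ≠ 1 := fun h => ht1 (orderOf_eq_one_iff.mp h)
        rcases (Nat.prime_three.eq_one_or_self_of_dvd _ h1) with h | h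
        · exact absurd h h2
        · have := IsPrimitiveRoot.orderOf t
          rwa [h] at this
  · -- backward direction
    rintro (h3 | ⟨ω, hω⟩)
    · refine ⟨1, 1, by simp, ?_⟩
      rw [okYY]
      have h30 : (3 : F) = 0 := by
        have : ((3 : ℕ) : F) = 0 := (ringChar.spec F 3).mpr (by rw [h3])
        exact_mod_cast this
      have : (1 : F) ^ 2 + 1 * 1 + 1 ^ 2 = 0 := by rw [← h30]; ring
      rw [this, zero_smul]
    · refine ⟨ω, 1, by simp, ?_⟩
      rw [okYY]
      have hpow : ω ^ 3 = 1 := hω.pow_eq_one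
      have hne1 : ω ≠ 1 := hω.ne_one (by norm_num)
      have h1 : (ω - 1) * (ω ^ 2 + ω + 1) = 0 := by linear_combination hpow
      have h2 : ω ^ 2 + ω + 1 = 0 := by
        rcases mul_eq_zero.mp h1 with h | h
        · exact absurd (sub_eq_zero.mp h) hne1
        · exact h
      have : ω ^ 2 + ω * 1 + 1 ^ 2 = 0 := by linear_combination h2
      rw [this, zero_smul]
end
end
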